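/- arXiv:1804.02059 — 5 statements merged into one kernel-verified Lean document; each statement's English description precedes it below -/
import Mathlib

section
/- Assume ∏_{k∈ℤ/nℤ} x_k ≠ ∏_{k∈ℤ/nℤ} y_k and set p_j := (∏_k x_k − ∏_k y_k)/λ_j(x,y,z) for each j ∈ ℤ/nℤ. Then for every j: (a) x_{j+1}/(z_j(1 + y_j/(z_j p_j))) = (∏_k x_k − ∏_k y_k)/λ_{j+1}(x,y,z); (b) x_{j+1}/(1 + z_j p_j/y_j) = y_j λ_j(x,y,z)/λ_{j+1}(x,y,z); (c) y_j(1 + z_j p_j/y_j) = x_{j+1} λ_{j+1}(x,y,z)/λ_j(x,y,z); (d) y_j(1 + z_j p_j/y_j)/(p_j(1 + y_j/(z_j p_j))) = z_j. (These four identities describe the effect of one square move as the inserted edge of weight p propagates once around the cylinder.) -/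
/-!
Everything rests on the recurrence `x_{i+1} λ_{i+1} = y_i λ_i + z_i (∏ x - ∏ y)`.
Continue the `m`-th path of `λ_i` up the right string to the vertex one full turn above `i`;
call its weight `G_i(m)` (`turnPathWeight`), for `0 ≤ m ≤ n`. Then `y_i λ_i = Σ_{m<n} G_i(m)`
and `x_{i+1} λ_{i+1} = Σ_{m<n} G_i(m+1)`, so the difference telescopes to
`G_i(n) - G_i(0) = z_i (∏ x - ∏ y)`. With `p_j = (∏ x - ∏ y)/λ_j` the recurrence reads
`1 + y_j/(z_j p_j) = x_{j+1} λ_{j+1} / (z_j (∏ x - ∏ y))` and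
`1 + z_j p_j/y_j = x_{j+1} λ_{j+1} / (y_j λ_j)`, and the four identities are field arithmetic.
-/

noncomputable section

/-- `λ_i(x,y,z)` for a cylindric 2-loop expanded directed plabic network with
white-to-black edge weights `x` (left string), `y` (right string) and crossing edge weights
`z`, all indexed by `ZMod n`:
`λ_i = Σ_{j=0}^{n-1} (∏_{k=1}^{j} x_{i+k}) · z_{i+j} · (∏_{k=j+1}^{n-1} y_{i+k})`. -/
def lam (n : ℕ) (x y z : ZMod n → ℝ) (i : ZMod n) : ℝ :=
  ∑ j ∈ Finset.range n,
    (∏ k ∈ Finset.Icc 1 j, x (i + (k : ZMod n))) * z (i + (j : ZMod n)) *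
      ∏ k ∈ Finset.Icc (j + 1) (n - 1), y (i + (k : ZMod n))

open Finset

theorem Finset.prod_Icc_add' {M α : Type*} [CommMonoid M] [AddCommMonoid α] [PartialOrder α]
    [IsOrderedCancelAddMonoid α] [ExistsAddOfLE α] [LocallyFiniteOrder α]
    (f : α → M) (a b c : α) : ∏ x ∈ Icc a b, f (x + c) = ∏ x ∈ Icc (a + c) (b + c), f x := by
  rw [← map_add_right_Icc, prod_map]
  rfl

theorem Finset.prod_Icc_add_one_add {M R : Type*} [CommMonoid M] [AddCommMonoidWithOne R]
    (f : R → M) (i : R) (a b : ℕ) :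
    ∏ k ∈ Icc a b, f (i + 1 + k) = ∏ k ∈ Icc (a + 1) (b + 1), f (i + k) := by
  rw [← prod_Icc_add']
  simp only [Nat.cast_add, Nat.cast_one, add_assoc, add_comm (1 : R)]

namespace ZMod

variable {n : ℕ} [NeZero n] {M : Type*} [CommMonoid M]

theorem prod_range_natCast (g : ZMod n → M) : ∏ k ∈ range n, g k = ∏ t, g t :=
  prod_bij' (fun k _ => (k : ZMod n)) (fun t _ => t.val) (fun _ _ => mem_univ _)
    (fun t _ => mem_range.2 t.val_lt) (fun _ hk => val_cast_of_lt (mem_range.1 hk))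
    (fun t _ => natCast_zmod_val t) (fun _ _ => rfl)

theorem prod_Icc_one_add (f : ZMod n → M) (i : ZMod n) :
    ∏ k ∈ Icc 1 n, f (i + k) = ∏ t, f t := by
  rw [← Ico_add_one_right_eq_Icc, prod_Ico_eq_prod_range, Nat.add_sub_cancel]
  calc ∏ k ∈ range n, f (i + ((1 + k : ℕ) : ZMod n))
      = ∏ k ∈ range n, f (i + 1 + k) := by simp only [Nat.cast_add, Nat.cast_one, add_assoc]
    _ = ∏ t, f t := by
      rw [prod_range_natCast (fun t => f (i + 1 + t))]
      exact Equiv.prod_comp (Equiv.addLeft (i + 1)) f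

end ZMod

section PathWeights

variable {n : ℕ} [NeZero n] (x y z : ZMod n → ℝ) (i : ZMod n)

def turnPathWeight (m : ℕ) : ℝ :=
  (∏ k ∈ Icc 1 m, x (i + k)) * z (i + m) * ∏ k ∈ Icc (m + 1) n, y (i + k)

theorem mul_lam_add_one :
    x (i + 1) * lam n x y z (i + 1) = ∑ m ∈ range n, turnPathWeight x y z i (m + 1) := by
  rw [lam, mul_sum]
  refine sum_congr rfl fun m _ => ?_
  rw [turnPathWeight, prod_Icc_add_one_add, prod_Icc_add_one_add, Nat.sub_add_cancel NeZero.one_le,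
    ← insert_Icc_add_one_left_eq_Icc (by omega : 1 ≤ m + 1), prod_insert (by simp), Nat.cast_one,
    Nat.cast_add_one, add_right_comm i, ← add_assoc]
  ring

theorem mul_lam :
    y i * lam n x y z i = ∑ m ∈ range n, turnPathWeight x y z i m := by
  obtain ⟨N, rfl⟩ := Nat.exists_eq_succ_of_ne_zero (NeZero.ne n)
  rw [lam, mul_sum]
  refine sum_congr rfl fun m hm => ?_
  rw [turnPathWeight, Nat.succ_sub_one, prod_Icc_succ_top (by simpa using hm), ZMod.natCast_self,
    add_zero]
  ring

theorem turnPathWeight_zero : turnPathWeight x y z i 0 = z i * ∏ k, y k := by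
  simp [turnPathWeight, ZMod.prod_Icc_one_add]

theorem turnPathWeight_self : turnPathWeight x y z i n = (∏ k, x k) * z i := by
  simp [turnPathWeight, ZMod.prod_Icc_one_add]

theorem lam_recurrence :
    x (i + 1) * lam n x y z (i + 1) =
      y i * lam n x y z i + z i * ((∏ k, x k) - ∏ k, y k) := by
  have telescope := sum_range_sub (turnPathWeight x y z i) n
  rw [sum_sub_distrib, ← mul_lam_add_one, ← mul_lam, turnPathWeight_self,
    turnPathWeight_zero] at telescope
  linear_combination telescope

end PathWeights

theorem lam_pos {n : ℕ} [NeZero n] {x y z : ZMod n → ℝ}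
    (hx : ∀ i, 0 < x i) (hy : ∀ i, 0 < y i) (hz : ∀ i, 0 < z i) (i : ZMod n) :
    0 < lam n x y z i :=
  sum_pos
    (fun _ _ => mul_pos (mul_pos (prod_pos fun _ _ => hx _) (hz _)) (prod_pos fun _ _ => hy _))
    (nonempty_range_iff.2 (NeZero.ne n))

theorem div_identities_of_mul_eq_mul_add_mul {K : Type*} [Field K] {a b c L L' D : K}
    (ha : a ≠ 0) (hb : b ≠ 0) (hc : c ≠ 0) (hL : L ≠ 0) (hL' : L' ≠ 0) (hD : D ≠ 0)
    (h : a * L' = b * L + c * D) :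
    a / (c * (1 + b / (c * (D / L)))) = D / L' ∧
      a / (1 + c * (D / L) / b) = b * L / L' ∧
      b * (1 + c * (D / L) / b) = a * L' / L ∧
      b * (1 + c * (D / L) / b) / (D / L * (1 + b / (c * (D / L)))) = c := by
  have h₁ : 1 + b / (c * (D / L)) = a * L' / (c * D) := by
    field_simp
    linear_combination -h
  have h₂ : 1 + c * (D / L) / b = a * L' / (b * L) := by
    field_simp
    linear_combination -h
  rw [h₁, h₂]
  refine ⟨?_, ?_, ?_, ?_⟩ <;> field_simp

/-- with `p_j := (∏ x − ∏ y)/λ_j(x,y,z)`, the four identities describing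
the effect of one square move as the inserted edge of weight `p` propagates once around the
cylinder. -/
theorem square_move_identities (n : ℕ) [NeZero n] (x y z : ZMod n → ℝ)
    (hx : ∀ i, 0 < x i) (hy : ∀ i, 0 < y i) (hz : ∀ i, 0 < z i)
    (hne : (∏ k : ZMod n, x k) ≠ ∏ k : ZMod n, y k)
    (p : ZMod n → ℝ)
    (hp : ∀ i, p i = ((∏ k : ZMod n, x k) - ∏ k : ZMod n, y k) / lam n x y z i)
    (j : ZMod n) :
    x (j + 1) / (z j * (1 + y j / (z j * p j))) =
        ((∏ k : ZMod n, x k) - ∏ k : ZMod n, y k) / lam n x y z (j + 1) ∧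
      x (j + 1) / (1 + z j * p j / y j) =
        y j * lam n x y z j / lam n x y z (j + 1) ∧
      y j * (1 + z j * p j / y j) =
        x (j + 1) * lam n x y z (j + 1) / lam n x y z j ∧
      y j * (1 + z j * p j / y j) / (p j * (1 + y j / (z j * p j))) = z j := by
  rw [hp j]
  exact div_identities_of_mul_eq_mul_add_mul (hx _).ne' (hy _).ne' (hz _).ne'
    (lam_pos hx hy hz j).ne' (lam_pos hx hy hz (j + 1)).ne' (sub_ne_zero.2 hne)
    (lam_recurrence x y z j)
end
end

section
/- For a spider web quiver Q with middle-circle x-variables x_1,…,x_n and with x_0 := x_n, the mutation sequence μ_{n−2}⋯μ_2 μ_1 applied to the initial seed gives, for each 1 ≤ i ≤ n−2, μ_{n−2}⋯μ_1(x_i) = [Σ_{j=0}^{i} x_{[j]⁻} x_{[j]⁺} (∏_{k=0}^{j−1} x_k)(∏_{k=j+1}^{i} x_{k+1} x_{k,A} x_{k,B})] / ∏_{k=1}^{i} x_k, where x_{k,A} := x_α if k is the smallest element of A and 1 otherwise, and x_{k,B} := x_β if k is the smallest element of B and 1 otherwise. -/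
noncomputable section

/-! ### Cluster mutation machinery -/

section Mutation

variable {V : Type*} [DecidableEq V] [Fintype V]

/-- Quiver mutation at a vertex `k`, acting on the skew-symmetric adjacency matrix `B`
(where `B i j` is the number of arrows `i → j` minus the number of arrows `j → i`;
a quiver with no loops and no directed 2-cycles is determined by this matrix). -/
def mutB (B : V → V → ℤ) (k : V) : V → V → ℤ := fun i j =>
  if i = k ∨ j = k then -B i j
  else B i j + max (B i k) 0 * max (B k j) 0 - max (-B i k) 0 * max (-B k j) 0

/-- Cluster `x`-variable mutation at a vertex `k`:
`x_k ↦ (∏_{arrows k → j} x_j + ∏_{arrows j → k} x_j) / x_k`, other variables fixed. -/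
def mutX (B : V → V → ℤ) (k : V) (x : V → ℝ) : V → ℝ := fun i =>
  if i = k then ((∏ j, x j ^ (B k j).toNat) + ∏ j, x j ^ (B j k).toNat) / x k else x i

/-- `y`-variable mutation at a vertex `k`: `y_k ↦ y_k⁻¹`, and for `i ≠ k` the variable `y_i`
is multiplied by `(1+y_k⁻¹)^{-e}` if there are `e > 0` arrows `k → i` and by `(1+y_k)^{e}`
if there are `e > 0` arrows `i → k`. -/
def mutY (B : V → V → ℤ) (k : V) (y : V → ℝ) : V → ℝ := fun i =>
  if i = k then (y k)⁻¹
  else y i * (1 + y k) ^ (B i k).toNat / (1 + (y k)⁻¹) ^ (B k i).toNat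

/-- One seed mutation step for `x`-seeds (quiver together with `x`-variables). -/
def stepX (s : (V → V → ℤ) × (V → ℝ)) (k : V) : (V → V → ℤ) × (V → ℝ) :=
  (mutB s.1 k, mutX s.1 k s.2)

/-- One seed mutation step for `y`-seeds (quiver together with `y`-variables). -/
def stepY (s : (V → V → ℤ) × (V → ℝ)) (k : V) : (V → V → ℤ) × (V → ℝ) :=
  (mutB s.1 k, mutY s.1 k s.2)

/-- Relabelling a quiver by a permutation of the vertices. -/
def relabelB (σ : Equiv.Perm V) (B : V → V → ℤ) : V → V → ℤ := fun i j => B (σ i) (σ j)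

/-- Relabelling a seed by a permutation of the vertices. -/
def relabelSeed (σ : Equiv.Perm V) (s : (V → V → ℤ) × (V → ℝ)) :
    (V → V → ℤ) × (V → ℝ) :=
  (relabelB σ s.1, fun i => s.2 (σ i))

end Mutation

/-! ### Spider web quivers with three circles

The vertex set consists of a middle circle with `n` vertices, an outer circle with `m`
vertices and an inner circle with `l` vertices; the vertex of the middle circle with
(1-based) label `i` is `Sum.inl (i-1 : ZMod n)`, and similarly for the other two circles,
so that the counterclockwise circle arrows are `v → v + 1`.  The arrows between adjacent
circles form alternating zig-zag cycles
`⋯ → oA t → aA t → oA (t-1) → aA (t-1) → ⋯` (outer/middle, where `aA` lists the middle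
vertices attached to the outer circle and `oA` the outer vertices attached to the middle
circle, both in increasing label order) and similarly `aB`, `oB` for inner/middle. -/

/-- Vertex set of a three-circle spider web quiver. -/
abbrev SWV (n m l : ℕ) := ZMod n ⊕ ZMod m ⊕ ZMod l

/-- The middle-circle vertex with 1-based label `i` (read cyclically, so label `n` = label `0`). -/
def midV (n m l : ℕ) [NeZero n] (i : ℕ) : SWV n m l :=
  Sum.inl (((i + (n - 1) : ℕ) : ZMod n))

/-- The outer-circle vertex with 1-based label `i` (read cyclically). -/
def outV (n m l : ℕ) [NeZero m] (i : ℕ) : SWV n m l :=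
  Sum.inr (Sum.inl (((i + (m - 1) : ℕ) : ZMod m)))

/-- The inner-circle vertex with 1-based label `i` (read cyclically). -/
def innV (n m l : ℕ) [NeZero l] (i : ℕ) : SWV n m l :=
  Sum.inr (Sum.inr (((i + (l - 1) : ℕ) : ZMod l)))

/-- The number of arrows `u → v` in the spider web quiver with attachment data
`aA, oA, aB, oB`. -/
def swArr (n m l fA fB : ℕ) [NeZero n] [NeZero m] [NeZero l] [NeZero fA] [NeZero fB]
    (aA : Fin fA → ZMod n) (oA : Fin fA → ZMod m)
    (aB : Fin fB → ZMod n) (oB : Fin fB → ZMod l) (u v : SWV n m l) : ℕ :=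
  (if ∃ i : ZMod n, u = Sum.inl i ∧ v = Sum.inl (i + 1) then 1 else 0) +
  (if ∃ j : ZMod m, u = Sum.inr (Sum.inl j) ∧ v = Sum.inr (Sum.inl (j + 1)) then 1 else 0) +
  (if ∃ k : ZMod l, u = Sum.inr (Sum.inr k) ∧ v = Sum.inr (Sum.inr (k + 1)) then 1 else 0) +
  (if ∃ t : Fin fA, u = Sum.inr (Sum.inl (oA t)) ∧ v = Sum.inl (aA t) then 1 else 0) +
  (if ∃ t : Fin fA, u = Sum.inl (aA t) ∧ v = Sum.inr (Sum.inl (oA (t - 1))) then 1 else 0) +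
  (if ∃ t : Fin fB, u = Sum.inr (Sum.inr (oB t)) ∧ v = Sum.inl (aB t) then 1 else 0) +
  (if ∃ t : Fin fB, u = Sum.inl (aB t) ∧ v = Sum.inr (Sum.inr (oB (t - 1))) then 1 else 0)

/-- The (skew-symmetric) adjacency matrix of the spider web quiver. -/
def swB (n m l fA fB : ℕ) [NeZero n] [NeZero m] [NeZero l] [NeZero fA] [NeZero fB]
    (aA : Fin fA → ZMod n) (oA : Fin fA → ZMod m)
    (aB : Fin fB → ZMod n) (oB : Fin fB → ZMod l) (u v : SWV n m l) : ℤ :=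
  (swArr n m l fA fB aA oA aB oB u v : ℤ) - swArr n m l fA fB aA oA aB oB v u

/-- The combinatorial conditions making the attachment data a genuine (three-circle)
spider web quiver: every circle carries at least the required number of vertices, there are
at least two attachments between adjacent circles (each face between circles is an oriented
cycle with exactly two between-circle arrows and at least 3 sides), the attachment maps are
strictly increasing for the label order on each circle, and the labelling convention of the
paper holds: the outer (resp. inner) vertex `1⁻` (resp. `1⁺`) is the one whose arrow points
at the smallest middle vertex connected to the outer (resp. inner) circle. -/
structure IsSpiderWeb (n m l fA fB : ℕ) [NeZero n] [NeZero m] [NeZero l] [NeZero fA]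
    [NeZero fB] (aA : Fin fA → ZMod n) (oA : Fin fA → ZMod m)
    (aB : Fin fB → ZMod n) (oB : Fin fB → ZMod l) : Prop where
  hn : 3 ≤ n
  hm : 2 ≤ m
  hl : 2 ≤ l
  hfA : 2 ≤ fA
  hfB : 2 ≤ fB
  monoAA : StrictMono fun t => (aA t).val
  monoOA : StrictMono fun t => (oA t).val
  monoAB : StrictMono fun t => (aB t).val
  monoOB : StrictMono fun t => (oB t).val
  convA : oA 0 = 0
  convB : oB 0 = 0

/-- The middle-circle vertices `1, 2, …, n` in order (the mutation sequence `μ_n ⋯ μ_2 μ_1`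
applied on the left of a seed corresponds to folding over this list). -/
def upList (n m l : ℕ) [NeZero n] : List (SWV n m l) :=
  (List.range n).map fun i => (Sum.inl ((i : ZMod n)) : SWV n m l)

/-- The middle-circle vertices `n-2, …, 2, 1` in order. -/
def downList (n m l : ℕ) [NeZero n] : List (SWV n m l) :=
  ((List.range (n - 2)).reverse).map fun i => (Sum.inl ((i : ZMod n)) : SWV n m l)

/-- The transposition `s_{n-1,n}` of the middle-circle vertices `n-1` and `n`. -/
def swapPerm (n m l : ℕ) [NeZero n] [NeZero m] [NeZero l] : Equiv.Perm (SWV n m l) :=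
  Equiv.swap (Sum.inl (((n - 2 : ℕ) : ZMod n))) (Sum.inl (((n - 1 : ℕ) : ZMod n)))

/-- `τ = μ₁ μ₂ ⋯ μ_{n-2} ∘ s_{n-1,n} ∘ μ_n μ_{n-1} ⋯ μ₁` acting on quivers. -/
def tauB (n m l : ℕ) [NeZero n] [NeZero m] [NeZero l]
    (B : SWV n m l → SWV n m l → ℤ) : SWV n m l → SWV n m l → ℤ :=
  (downList n m l).foldl mutB (relabelB (swapPerm n m l) ((upList n m l).foldl mutB B))

/-- `τ` acting on `x`-seeds. -/
def tauX (n m l : ℕ) [NeZero n] [NeZero m] [NeZero l]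
    (s : (SWV n m l → SWV n m l → ℤ) × (SWV n m l → ℝ)) :
    (SWV n m l → SWV n m l → ℤ) × (SWV n m l → ℝ) :=
  (downList n m l).foldl stepX (relabelSeed (swapPerm n m l) ((upList n m l).foldl stepX s))

/-- `τ` acting on `y`-seeds. -/
def tauY (n m l : ℕ) [NeZero n] [NeZero m] [NeZero l]
    (s : (SWV n m l → SWV n m l → ℤ) × (SWV n m l → ℝ)) :
    (SWV n m l → SWV n m l → ℤ) × (SWV n m l → ℝ) :=
  (downList n m l).foldl stepY (relabelSeed (swapPerm n m l) ((upList n m l).foldl stepY s))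

/-- `x_k` for the middle circle, `1 ≤ k ≤ n`, with the convention `x_0 := x_n`
(read cyclically). -/
def xm (n m l : ℕ) [NeZero n] (x : SWV n m l → ℝ) (k : ℕ) : ℝ := x (midV n m l k)

/-- `x_{[j]⁻}`: the `x`-variable of the largest outer-circle vertex having an arrow to an
element of `{1, …, j}` of the middle circle, or `1` if there is none. -/
def xjm (n m l fA : ℕ) [NeZero n] [NeZero m] [NeZero fA]
    (aA : Fin fA → ZMod n) (oA : Fin fA → ZMod m) (x : SWV n m l → ℝ) (j : ℕ) : ℝ :=
  if hS : (Finset.univ.filter fun t : Fin fA => (aA t).val + 1 ≤ j).Nonempty then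
    x (Sum.inr (Sum.inl
      (oA ((Finset.univ.filter fun t : Fin fA => (aA t).val + 1 ≤ j).max' hS))))
  else 1

/-- `x_{[j]⁺}`: the `x`-variable of the largest inner-circle vertex having an arrow to an
element of `{1, …, j}` of the middle circle, or `1` if there is none. -/
def xjp (n m l fB : ℕ) [NeZero n] [NeZero l] [NeZero fB]
    (aB : Fin fB → ZMod n) (oB : Fin fB → ZMod l) (x : SWV n m l → ℝ) (j : ℕ) : ℝ :=
  if hS : (Finset.univ.filter fun t : Fin fB => (aB t).val + 1 ≤ j).Nonempty then
    x (Sum.inr (Sum.inr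
      (oB ((Finset.univ.filter fun t : Fin fB => (aB t).val + 1 ≤ j).max' hS))))
  else 1

/-- `x_{k,A}`: equal to `x_α` (where `α` is the largest outer vertex connected to the middle
circle) if `k` is the smallest element of `A`, and `1` otherwise. -/
def xkA (n m l fA : ℕ) [NeZero n] [NeZero m] [NeZero fA]
    (aA : Fin fA → ZMod n) (oA : Fin fA → ZMod m) (x : SWV n m l → ℝ) (k : ℕ) : ℝ :=
  if k = (aA 0).val + 1 then x (Sum.inr (Sum.inl (oA (0 - 1)))) else 1

/-- `x_{k,B}`: equal to `x_β` (where `β` is the largest inner vertex connected to the middle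
circle) if `k` is the smallest element of `B`, and `1` otherwise. -/
def xkB (n m l fB : ℕ) [NeZero n] [NeZero l] [NeZero fB]
    (aB : Fin fB → ZMod n) (oB : Fin fB → ZMod l) (x : SWV n m l → ℝ) (k : ℕ) : ℝ :=
  if k = (aB 0).val + 1 then x (Sum.inr (Sum.inr (oB (0 - 1)))) else 1

/-!
Mutating successively at the middle vertices `1, 2, …, n - 2`, the column of the quiver at
vertex `i` just before it is mutated stays explicit: arrows `n → i`, `i → i - 1`, `i → i + 1`,
an arrow into `i` from the last outer (inner) vertex attached to `{1, …, i}`, and an arrow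
`i → α` (`i → β`) when `i` is the smallest element of `A` (of `B`). This follows by induction
along the path, because mutating at `i - 1`, which has a single arrow to `i` and none to the
later vertices, only reverses that arrow and adds the positive part of its column to the
column of `i`. The exchange relation at `i` then reads
`x'_i x_i = x'_{i-1} x_{i+1} x_{i,A} x_{i,B} + x_0 x_{[i]⁻} x_{[i]⁺}` (with `x'_0 := 1`),
whose solution is the claimed sum; later mutations no longer touch `x'_i`.
-/

open Finset

section Mutation

variable {V : Type*} [DecidableEq V]

theorem mutB_antisymm {B : V → V → ℤ} (hB : ∀ u v, B u v = -B v u) (k u v : V) :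
    mutB B k u v = -mutB B k v u := by
  unfold mutB
  by_cases h : u = k ∨ v = k
  · rw [if_pos h, if_pos h.symm, hB u v]
  · rw [if_neg h, if_neg fun h' => h h'.symm, hB v u, hB v k, hB k u]
    ring_nf

theorem mutB_apply_of_eq_zero {B : V → V → ℤ} {k q : V} (hqk : q ≠ k) (hq : B k q = 0)
    (v : V) : mutB B k v q = B v q := by
  by_cases hv : v = k
  · subst hv
    simp [mutB, hq]
  · simp [mutB, hv, hqk, hq]

theorem mutB_apply_of_eq_one {B : V → V → ℤ} {k q : V} (hqk : q ≠ k) (hq : B k q = 1)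
    (v : V) : mutB B k v q = if v = k then -1 else B v q + max (B v k) 0 := by
  by_cases hv : v = k
  · subst hv
    simp [mutB, hq]
  · simp [mutB, hv, hqk, hq]

theorem mutX_self_of_col [Fintype V] {B : V → V → ℤ} (hB : ∀ u v, B u v = -B v u) {k : V}
    {c : V → ℤ} (hc : ∀ v, B v k = c v) (x : V → ℝ) :
    mutX B k x k = ((∏ v, x v ^ (-c v).toNat) + ∏ v, x v ^ (c v).toNat) / x k := by
  simp only [mutX, if_true, hB k, hc]

def pathSeed [Fintype V] (κ : ℕ → V) (s : (V → V → ℤ) × (V → ℝ)) (p : ℕ) :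
    (V → V → ℤ) × (V → ℝ) :=
  ((List.range p).map κ).foldl stepX s

variable [Fintype V] {κ : ℕ → V} {s : (V → V → ℤ) × (V → ℝ)}

theorem pathSeed_succ (p : ℕ) : pathSeed κ s (p + 1) = stepX (pathSeed κ s p) (κ p) := by
  simp [pathSeed, List.range_succ]

theorem pathSeed_fst_antisymm (hs : ∀ u v, s.1 u v = -s.1 v u) (p : ℕ) (u v : V) :
    (pathSeed κ s p).1 u v = -(pathSeed κ s p).1 v u := by
  induction p generalizing u v with
  | zero => exact hs u v
  | succ p ih => rw [pathSeed_succ]; exact mutB_antisymm ih _ u v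

theorem pathSeed_snd_eq_of_forall_ne {r p : ℕ} (hrp : r ≤ p) {v : V}
    (hv : ∀ q, r ≤ q → q < p → κ q ≠ v) :
    (pathSeed κ s p).2 v = (pathSeed κ s r).2 v := by
  induction p, hrp using Nat.le_induction with
  | base => rfl
  | succ p hrp ih =>
    rw [pathSeed_succ]
    simp only [stepX, mutX, if_neg (hv p hrp p.lt_succ_self).symm]
    exact ih fun q hrq hqp => hv q hrq (hqp.trans p.lt_succ_self)

/-- `c p` is the column at `κ p` just before the mutation there: mutating at `κ p`, which has a
single arrow to `κ (p + 1)` and none to the later path vertices, adds the positive part of the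
column at `κ p` to the column at `κ (p + 1)` and leaves the later columns alone. -/
theorem pathSeed_fst_apply_self {N : ℕ} (hs : ∀ u v, s.1 u v = -s.1 v u)
    (hκ : Set.InjOn κ (Set.Iic N)) (c : ℕ → V → ℤ) (hc0 : ∀ v, c 0 v = s.1 v (κ 0))
    (hc : ∀ p < N, ∀ v,
      c (p + 1) v = if v = κ p then -1 else s.1 v (κ (p + 1)) + max (c p v) 0)
    (hnext : ∀ p < N, c p (κ (p + 1)) = -1)
    (hfar : ∀ p q, p + 1 < q → q ≤ N → c p (κ q) = 0) :
    ∀ p ≤ N, ∀ v, (pathSeed κ s p).1 v (κ p) = c p v := by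
  suffices h : ∀ p ≤ N, (∀ v, (pathSeed κ s p).1 v (κ p) = c p v) ∧
      ∀ q, p < q → q ≤ N → ∀ v, (pathSeed κ s p).1 v (κ q) = s.1 v (κ q) from
    fun p hp => (h p hp).1
  intro p hp
  induction p with
  | zero => exact ⟨fun v => (hc0 v).symm, fun _ _ _ _ => rfl⟩
  | succ p ih =>
    obtain ⟨hcol, hlater⟩ := ih (by omega)
    have hne : ∀ q, p < q → q ≤ N → κ q ≠ κ p := fun q hpq hq h =>
      hpq.ne (hκ (Set.mem_Iic.2 (by omega)) (Set.mem_Iic.2 hq) h.symm)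
    have hrow : ∀ q, (pathSeed κ s p).1 (κ p) (κ q) = -c p (κ q) := fun q => by
      rw [pathSeed_fst_antisymm hs, hcol]
    rw [pathSeed_succ]
    refine ⟨fun v => ?_, fun q hpq hq v => ?_⟩
    · dsimp only [stepX]
      rw [mutB_apply_of_eq_one (hne _ p.lt_succ_self hp) (by rw [hrow, hnext p hp]; rfl),
        hlater _ p.lt_succ_self hp, hcol, hc p hp]
    · dsimp only [stepX]
      rw [mutB_apply_of_eq_zero (hne q (by omega) hq)
        (by rw [hrow, hfar p q hpq hq, neg_zero]), hlater q (by omega) hq]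

end Mutation

section PathSum

variable {R : Type*}

def pathSum [CommSemiring R] (a w e : ℕ → R) (i : ℕ) : R :=
  ∑ j ∈ range (i + 1), a j * (∏ k ∈ range j, w k) * ∏ k ∈ Icc (j + 1) i, e k

theorem pathSum_zero [CommSemiring R] (a w e : ℕ → R) : pathSum a w e 0 = a 0 := by
  simp [pathSum]

theorem pathSum_succ [CommSemiring R] (a w e : ℕ → R) (i : ℕ) :
    pathSum a w e (i + 1) =
      pathSum a w e i * e (i + 1) + a (i + 1) * ∏ k ∈ range (i + 1), w k := by
  rw [pathSum, sum_range_succ, Icc_eq_empty (by omega), prod_empty, mul_one, pathSum, sum_mul]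
  congr 1
  refine sum_congr rfl fun j hj => ?_
  rw [prod_Icc_succ_top (by simp at hj; omega)]
  ring

theorem prod_range_succ_eq_mul_prod_Icc [CommMonoid R] (w : ℕ → R) (i : ℕ) :
    ∏ k ∈ range (i + 1), w k = w 0 * ∏ k ∈ Icc 1 i, w k := by
  rw [range_eq_Ico, prod_eq_prod_Ico_succ_bot (by omega), zero_add, Ico_add_one_right_eq_Icc]

theorem pathSum_div_prod_succ [Field R] (a w e : ℕ → R) (i : ℕ) (hw : ∀ k, w k ≠ 0) :
    pathSum a w e (i + 1) / ∏ k ∈ Icc 1 (i + 1), w k =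
      (pathSum a w e i / (∏ k ∈ Icc 1 i, w k) * e (i + 1) + w 0 * a (i + 1)) / w (i + 1) := by
  have hP : ∏ k ∈ Icc 1 i, w k ≠ 0 := prod_ne_zero_iff.2 fun k _ => hw k
  rw [pathSum_succ, prod_range_succ_eq_mul_prod_Icc, prod_Icc_succ_top (by omega)]
  field_simp

end PathSum

theorem Fin.sub_one_ne_self {c : ℕ} [NeZero c] (hc : 2 ≤ c) (t : Fin c) : t - 1 ≠ t := by
  rw [Ne, sub_eq_self, Fin.one_eq_zero_iff]
  omega

namespace SpiderWeb

theorem natCast_eq_iff_val_eq {N : ℕ} [NeZero N] {i : ℕ} (hi : i < N) {a : ZMod N} :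
    (i : ZMod N) = a ↔ a.val = i := by
  rw [← ZMod.val_injective N |>.eq_iff, ZMod.val_cast_of_lt hi, eq_comm]

section Side

variable {N c w : ℕ} {f : Fin c → ZMod N} {g : Fin c → ZMod w}

variable (f) in
def attachedUpTo (i : ℕ) : Finset (Fin c) := univ.filter fun t => (f t).val + 1 ≤ i

@[simp]
theorem mem_attachedUpTo {i : ℕ} {t : Fin c} :
    t ∈ attachedUpTo f i ↔ (f t).val + 1 ≤ i := by
  simp [attachedUpTo]

variable (f g) in
def IsLastAttached (i : ℕ) (j : ZMod w) : Prop :=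
  ∃ hS : (attachedUpTo f i).Nonempty, j = g ((attachedUpTo f i).max' hS)

variable (f g) in
open Classical in
/-- The side-circle part of the column at the middle vertex with label `i`, once the vertices
with labels `1, …, i - 1` have been mutated. -/
def sideCol [NeZero c] (i : ℕ) (j : ZMod w) : ℤ :=
  if IsLastAttached f g i j then 1 else if i = (f 0).val + 1 ∧ j = g (0 - 1) then -1 else 0

variable (f g) in
def sideArr [NeZero c] (a : ZMod N) (j : ZMod w) : ℤ :=
  (if ∃ t, j = g t ∧ a = f t then 1 else 0) -
    (if ∃ t, a = f t ∧ j = g (t - 1) then 1 else 0)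

theorem sideCol_zero [NeZero c] (j : ZMod w) : sideCol f g 0 j = 0 := by
  simp [sideCol, IsLastAttached, attachedUpTo]

open Classical in
theorem max_sideCol_zero [NeZero c] (i : ℕ) (j : ZMod w) :
    max (sideCol f g i j) 0 = if IsLastAttached f g i j then 1 else 0 := by
  unfold sideCol
  split_ifs <;> rfl

theorem isLastAttached_succ_of_forall_ne {i : ℕ} (h : ∀ t, (f t).val ≠ i) {j : ZMod w} :
    IsLastAttached f g (i + 1) j ↔ IsLastAttached f g i j := by
  have hS : attachedUpTo f (i + 1) = attachedUpTo f i := by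
    ext t
    have := h t
    simp only [mem_attachedUpTo]
    omega
  simp only [IsLastAttached, hS]

theorem mem_attachedUpTo_iff_lt (hf : StrictMono fun t => (f t).val) {t₁ : Fin c} {i : ℕ}
    (ht₁ : (f t₁).val = i) {t : Fin c} : t ∈ attachedUpTo f i ↔ t < t₁ := by
  rw [mem_attachedUpTo, ← hf.lt_iff_lt, ht₁, Nat.add_one_le_iff]

theorem max'_attachedUpTo_succ (hf : StrictMono fun t => (f t).val) {t₁ : Fin c} {i : ℕ}
    (ht₁ : (f t₁).val = i) (hS : (attachedUpTo f (i + 1)).Nonempty) :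
    (attachedUpTo f (i + 1)).max' hS = t₁ := by
  rw [max'_eq_iff, mem_attachedUpTo, ht₁]
  refine ⟨le_rfl, fun t ht => ?_⟩
  rw [mem_attachedUpTo, ← ht₁, Nat.add_le_add_iff_right] at ht
  exact hf.le_iff_le.1 ht

theorem attachedUpTo_nonempty_iff [NeZero c] (hf : StrictMono fun t => (f t).val)
    {t₁ : Fin c} {i : ℕ} (ht₁ : (f t₁).val = i) :
    (attachedUpTo f i).Nonempty ↔ t₁ ≠ 0 := by
  simp only [Finset.Nonempty, mem_attachedUpTo_iff_lt hf ht₁, ← Fin.pos_iff_ne_zero]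
  exact ⟨fun ⟨t, ht⟩ => (Fin.zero_le t).trans_lt ht, fun h => ⟨0, h⟩⟩

theorem max'_attachedUpTo [NeZero c] (hf : StrictMono fun t => (f t).val) {t₁ : Fin c}
    {i : ℕ} (ht₁ : (f t₁).val = i) (hS : (attachedUpTo f i).Nonempty) :
    (attachedUpTo f i).max' hS = t₁ - 1 := by
  have h0 : t₁ ≠ 0 := (attachedUpTo_nonempty_iff hf ht₁).1 hS
  have hval := Fin.val_sub_one_of_ne_zero h0
  have hpos : 0 < t₁.val := Nat.pos_of_ne_zero (Fin.val_ne_zero_iff.2 h0)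
  rw [max'_eq_iff, mem_attachedUpTo_iff_lt hf ht₁, Fin.lt_def, hval]
  refine ⟨by omega, fun t ht => ?_⟩
  rw [mem_attachedUpTo_iff_lt hf ht₁, Fin.lt_def] at ht
  rw [Fin.le_def, hval]
  omega

theorem isLastAttached_succ_iff (hf : StrictMono fun t => (f t).val) {t₁ : Fin c} {i : ℕ}
    (ht₁ : (f t₁).val = i) {j : ZMod w} : IsLastAttached f g (i + 1) j ↔ j = g t₁ := by
  have hS : (attachedUpTo f (i + 1)).Nonempty := ⟨t₁, by simp [ht₁]⟩
  refine ⟨fun ⟨hS, hj⟩ => ?_, fun hj => ⟨hS, ?_⟩⟩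
  · rwa [max'_attachedUpTo_succ hf ht₁] at hj
  · rwa [max'_attachedUpTo_succ hf ht₁]

theorem isLastAttached_iff [NeZero c] (hf : StrictMono fun t => (f t).val) {t₁ : Fin c}
    {i : ℕ} (ht₁ : (f t₁).val = i) {j : ZMod w} :
    IsLastAttached f g i j ↔ t₁ ≠ 0 ∧ j = g (t₁ - 1) := by
  refine ⟨fun ⟨hS, hj⟩ => ⟨(attachedUpTo_nonempty_iff hf ht₁).1 hS, ?_⟩,
    fun ⟨h0, hj⟩ => ⟨(attachedUpTo_nonempty_iff hf ht₁).2 h0, ?_⟩⟩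
  · rwa [max'_attachedUpTo hf ht₁] at hj
  · rwa [max'_attachedUpTo hf ht₁]

theorem sideCol_succ [NeZero N] [NeZero c] (hf : StrictMono fun t => (f t).val)
    (hg : Function.Injective g) (hc : 2 ≤ c) {i : ℕ} (hi : i < N) (j : ZMod w) :
    sideCol f g (i + 1) j = sideArr f g i j + max (sideCol f g i j) 0 := by
  classical
  have hval : ∀ t, (i : ZMod N) = f t ↔ (f t).val = i := fun t => natCast_eq_iff_val_eq hi
  rw [max_sideCol_zero]
  by_cases h : ∃ t₁, (f t₁).val = i
  · obtain ⟨t₁, ht₁⟩ := h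
    have huniq : ∀ t, (f t).val = i ↔ t = t₁ := fun t =>
      ⟨fun h => hf.injective (h.trans ht₁.symm), fun h => h ▸ ht₁⟩
    have hfirst : i + 1 = (f 0).val + 1 ↔ t₁ = 0 := by
      rw [add_left_inj, eq_comm, huniq, eq_comm]
    have hne : g (t₁ - 1) ≠ g t₁ := hg.ne (Fin.sub_one_ne_self hc t₁)
    simp only [sideCol, sideArr, hval, huniq, isLastAttached_succ_iff hf ht₁,
      isLastAttached_iff hf ht₁, hfirst, exists_eq_left]
    -- the arrow `g (t₁ - 1) → i + 1` created by the mutation at `i` cancels the original arrow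
    -- `i + 1 → g (t₁ - 1)`, unless `t₁ = 0`
    obtain rfl | h1 := eq_or_ne j (g t₁)
    · simp [hne.symm]
    obtain rfl | h2 := eq_or_ne j (g (t₁ - 1)) <;>
      rcases eq_or_ne t₁ 0 with rfl | h0 <;> simp [*, -zero_sub]
  · push Not at h
    have hfirst : i + 1 ≠ (f 0).val + 1 := fun e => h 0 (by omega)
    simp only [sideCol, sideArr, isLastAttached_succ_of_forall_ne h, hval, h, hfirst, false_and,
      and_false, exists_false, if_false]
    split_ifs <;> rfl

theorem prod_pow_sideCol [NeZero c] [NeZero w] {M : Type*} [CommMonoid M] (y : ZMod w → M)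
    (i : ℕ) :
    ∏ j, y j ^ (sideCol f g i j).toNat =
      if hS : (attachedUpTo f i).Nonempty then y (g ((attachedUpTo f i).max' hS)) else 1 := by
  classical
  have h : ∀ j, (sideCol f g i j).toNat = if IsLastAttached f g i j then 1 else 0 := by
    intro j
    unfold sideCol
    split_ifs <;> rfl
  by_cases hS : (attachedUpTo f i).Nonempty <;> simp [h, hS, IsLastAttached]

theorem prod_pow_neg_sideCol [NeZero c] [NeZero w] (hf : StrictMono fun t => (f t).val)
    (hg : Function.Injective g) (hc : 2 ≤ c) {M : Type*} [CommMonoid M] (y : ZMod w → M)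
    (i : ℕ) :
    ∏ j, y j ^ (-sideCol f g i j).toNat = if i = (f 0).val + 1 then y (g (0 - 1)) else 1 := by
  have h : ∀ j, (-sideCol f g i j).toNat =
      if i = (f 0).val + 1 ∧ j = g (0 - 1) then 1 else 0 := by
    intro j
    unfold sideCol
    split_ifs with htop hfirst hfirst
    · obtain ⟨hS, rfl⟩ := htop
      obtain ⟨rfl, hj⟩ := hfirst
      rw [max'_attachedUpTo_succ hf rfl] at hj
      exact absurd hj (hg.ne (Fin.sub_one_ne_self hc 0)).symm
    all_goals rfl
  simp only [h]
  split_ifs with hi <;> simp [hi, -zero_sub]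

end Side

section Middle

variable {n : ℕ}

theorem natCast_inj_of_lt [NeZero n] {a b : ℕ} (ha : a < n) (hb : b < n) :
    (a : ZMod n) = b ↔ a = b := by
  rw [natCast_eq_iff_val_eq ha, ZMod.val_cast_of_lt hb, eq_comm]

theorem neg_one_eq_natCast [NeZero n] : (-1 : ZMod n) = ((n - 1 : ℕ) : ZMod n) := by
  rw [Nat.cast_sub NeZero.one_le, ZMod.natCast_self, Nat.cast_one, zero_sub]

theorem eq_neg_one_or_exists_natCast [NeZero n] (a : ZMod n) :
    a = -1 ∨ ∃ k, k + 1 < n ∧ a = k := by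
  have := a.val_lt
  rw [neg_one_eq_natCast, ← ZMod.natCast_zmod_val a, natCast_inj_of_lt this (by omega)]
  by_cases h : a.val = n - 1
  · exact Or.inl h
  · exact Or.inr ⟨a.val, by omega, rfl⟩

/-- The middle-circle part of the column at the middle vertex with label `p + 1`, once the
vertices with labels `1, …, p` have been mutated; `-1 : ZMod n` is the vertex with label `n`. -/
def midCol (p : ℕ) (a : ZMod n) : ℤ :=
  if a = -1 then 1 else if a + 1 = p then -1 else if a = p + 1 then -1 else 0

theorem midCol_neg_one (p : ℕ) : midCol p (-1 : ZMod n) = 1 := if_pos rfl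

theorem midCol_natCast [NeZero n] {p k : ℕ} (hp : p + 2 < n) (hk : k + 1 < n) :
    midCol p (k : ZMod n) = if k + 1 = p then -1 else if k = p + 1 then -1 else 0 := by
  simp only [midCol, neg_one_eq_natCast, ← Nat.cast_succ]
  simp (disch := omega) only [natCast_inj_of_lt]
  rw [if_neg (by omega)]

theorem prod_pow_midCol [NeZero n] {M : Type*} [CommMonoid M] (p : ℕ) (y : ZMod n → M) :
    ∏ a, y a ^ (midCol p a).toNat = y (-1) := by
  rw [Fintype.prod_eq_single (-1) fun a ha => ?_, midCol_neg_one, Int.toNat_one, pow_one]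
  unfold midCol
  rw [if_neg ha]
  split_ifs <;> simp

theorem prod_pow_neg_midCol [NeZero n] {M : Type*} [CommMonoid M] {p : ℕ} (hp : p + 2 < n)
    (y : ZMod n → M) :
    ∏ a, y a ^ (-midCol p a).toNat =
      (if 1 ≤ p then y ((p - 1 : ℕ) : ZMod n) else 1) * y ((p + 1 : ℕ) : ZMod n) := by
  have hexp : ∀ a : ZMod n, (-midCol p a).toNat =
      if (1 ≤ p ∧ a = ((p - 1 : ℕ) : ZMod n)) ∨ a = ((p + 1 : ℕ) : ZMod n) then 1
      else 0 := by
    intro a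
    rcases eq_neg_one_or_exists_natCast a with rfl | ⟨k, hk, rfl⟩
    · rw [midCol_neg_one, neg_one_eq_natCast]
      simp (disch := omega) only [natCast_inj_of_lt]
      rw [if_neg (by omega)]
      rfl
    · rw [midCol_natCast hp hk]
      simp (disch := omega) only [natCast_inj_of_lt]
      split_ifs <;> first | rfl | omega
  simp only [hexp, pow_ite, pow_one, pow_zero]
  rcases Nat.eq_zero_or_pos p with rfl | hp1
  · simp
  · rw [if_pos (show 1 ≤ p from hp1), Fintype.prod_eq_mul _ _ ?_ fun a ha => if_neg (by tauto),
      if_pos (by tauto), if_pos (by tauto)]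
    rw [Ne, natCast_inj_of_lt (by omega) (by omega)]
    omega

end Middle

section Quiver

variable {n m l fA fB : ℕ}

variable (n m l) in
/-- The `p`-th vertex of the mutation sequence: the middle vertex with label `p + 1`. -/
def pathVertex (p : ℕ) : SWV n m l := Sum.inl (p : ZMod n)

theorem injOn_pathVertex [NeZero n] : Set.InjOn (pathVertex n m l) (Set.Iio n) :=
  fun p hp q hq h => by rwa [pathVertex, pathVertex, Sum.inl.injEq, natCast_inj_of_lt hp hq] at h

/-- The type ascription `(s : ZMod n)` makes Lean coerce `List.range k` itself to a
`List (ZMod n)` (through the list monad) before mapping. -/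
theorem map_inl_range_eq_map_pathVertex (k : ℕ) :
    ((List.range k).map fun s => (Sum.inl ((s : ZMod n)) : SWV n m l)) =
      (List.range k).map (pathVertex n m l) := by
  induction k with
  | zero => rfl
  | succ k ih => simp_all [List.range_succ, pathVertex]

theorem midV_succ [NeZero n] (p : ℕ) : midV n m l (p + 1) = pathVertex n m l p := by
  rw [midV, pathVertex, show p + 1 + (n - 1) = p + n by have := NeZero.pos n; omega,
    Nat.cast_add, ZMod.natCast_self, add_zero]

theorem xm_succ [NeZero n] (x : SWV n m l → ℝ) (p : ℕ) :
    xm n m l x (p + 1) = x (pathVertex n m l p) := by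
  rw [xm, midV_succ]

theorem xm_zero [NeZero n] (x : SWV n m l → ℝ) : xm n m l x 0 = x (Sum.inl (-1)) := by
  rw [xm, midV, zero_add, neg_one_eq_natCast]

variable [NeZero n] [NeZero fA] [NeZero fB] {aA : Fin fA → ZMod n} {oA : Fin fA → ZMod m}
  {aB : Fin fB → ZMod n} {oB : Fin fB → ZMod l}

variable (aA oA aB oB) in
/-- The column at `pathVertex p` after the mutations at `pathVertex 0, …, pathVertex (p - 1)`. -/
def swCol (p : ℕ) : SWV n m l → ℤ
  | Sum.inl a => midCol p a
  | Sum.inr (Sum.inl j) => sideCol aA oA (p + 1) j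
  | Sum.inr (Sum.inr k) => sideCol aB oB (p + 1) k

theorem swCol_next {p : ℕ} (hp : p + 3 < n) :
    swCol aA oA aB oB p (pathVertex n m l (p + 1)) = -1 := by
  rw [pathVertex, swCol, midCol_natCast (by omega) (by omega), if_neg (by omega), if_pos rfl]

theorem swCol_far {p q : ℕ} (hpq : p + 1 < q) (hq : q + 2 < n) :
    swCol aA oA aB oB p (pathVertex n m l q) = 0 := by
  rw [pathVertex, swCol, midCol_natCast (by omega) (by omega), if_neg (by omega),
    if_neg (by omega)]

variable [NeZero m] [NeZero l]

theorem swB_antisymm (u v : SWV n m l) :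
    swB n m l fA fB aA oA aB oB u v = -swB n m l fA fB aA oA aB oB v u := by
  simp [swB]

theorem swB_inl_inl (a b : ZMod n) :
    swB n m l fA fB aA oA aB oB (Sum.inl a) (Sum.inl b) =
      (if b = a + 1 then 1 else 0) - (if a = b + 1 then 1 else 0) := by
  simp [swB, swArr]

theorem swB_inr_inl_inl (j : ZMod m) (a : ZMod n) :
    swB n m l fA fB aA oA aB oB (Sum.inr (Sum.inl j)) (Sum.inl a) = sideArr aA oA a j := by
  simp [swB, swArr, sideArr]

theorem swB_inr_inr_inl (k : ZMod l) (a : ZMod n) :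
    swB n m l fA fB aA oA aB oB (Sum.inr (Sum.inr k)) (Sum.inl a) = sideArr aB oB a k := by
  simp [swB, swArr, sideArr]

theorem swB_natCast_natCast {k q : ℕ} (hk : k + 1 < n) (hq : q + 1 < n) :
    swB n m l fA fB aA oA aB oB (Sum.inl (k : ZMod n)) (Sum.inl (q : ZMod n)) =
      (if q = k + 1 then 1 else 0) - (if k = q + 1 then 1 else 0) := by
  simp only [swB_inl_inl, ← Nat.cast_succ]
  simp (disch := omega) only [natCast_inj_of_lt]

theorem swB_neg_one_natCast {q : ℕ} (hq : q + 2 < n) :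
    swB n m l fA fB aA oA aB oB (Sum.inl (-1)) (Sum.inl (q : ZMod n)) =
      if q = 0 then 1 else 0 := by
  rw [swB_inl_inl, neg_add_cancel]
  simp only [← Nat.cast_zero (R := ZMod n), ← Nat.cast_succ, neg_one_eq_natCast]
  simp (disch := omega) only [natCast_inj_of_lt]
  split_ifs <;> omega

theorem swCol_zero (hsw : IsSpiderWeb n m l fA fB aA oA aB oB) (v : SWV n m l) :
    swCol aA oA aB oB 0 v = swB n m l fA fB aA oA aB oB v (pathVertex n m l 0) := by
  have hn := hsw.hn
  rcases v with a | j | k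
  · rcases eq_neg_one_or_exists_natCast a with rfl | ⟨k, hk, rfl⟩
    · rw [swCol, pathVertex, swB_neg_one_natCast (by omega), midCol_neg_one, if_pos rfl]
    · rw [swCol, pathVertex, midCol_natCast (by omega) hk, swB_natCast_natCast hk (by omega)]
      split_ifs <;> simp_all
  · rw [swCol, pathVertex, swB_inr_inl_inl, sideCol_succ hsw.monoAA hsw.monoOA.injective.of_comp
      hsw.hfA (by omega), sideCol_zero, max_self, add_zero]
  · rw [swCol, pathVertex, swB_inr_inr_inl, sideCol_succ hsw.monoAB hsw.monoOB.injective.of_comp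
      hsw.hfB (by omega), sideCol_zero, max_self, add_zero]

theorem swCol_succ (hsw : IsSpiderWeb n m l fA fB aA oA aB oB) {p : ℕ} (hp : p + 4 ≤ n)
    (v : SWV n m l) :
    swCol aA oA aB oB (p + 1) v = if v = pathVertex n m l p then -1
      else swB n m l fA fB aA oA aB oB v (pathVertex n m l (p + 1)) +
        max (swCol aA oA aB oB p v) 0 := by
  rcases v with a | j | k
  · rcases eq_neg_one_or_exists_natCast a with rfl | ⟨k, hk, rfl⟩
    · have hp : (-1 : ZMod n) ≠ p := by
        rw [neg_one_eq_natCast, Ne, natCast_inj_of_lt (by omega) (by omega)]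
        omega
      rw [pathVertex, pathVertex, swB_neg_one_natCast (by omega), if_neg (by simpa using hp),
        if_neg (by omega), swCol, swCol, midCol_neg_one, midCol_neg_one]
      rfl
    · rw [swCol, swCol, pathVertex, pathVertex, midCol_natCast (by omega) hk,
        midCol_natCast (by omega) hk, swB_natCast_natCast hk (by omega)]
      simp (disch := omega) only [Sum.inl.injEq, natCast_inj_of_lt]
      split_ifs <;> omega
  · simp only [pathVertex, reduceCtorEq, if_false]
    rw [swCol, swCol, swB_inr_inl_inl,
      sideCol_succ hsw.monoAA hsw.monoOA.injective.of_comp hsw.hfA (by omega)]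
  · simp only [pathVertex, reduceCtorEq, if_false]
    rw [swCol, swCol, swB_inr_inr_inl,
      sideCol_succ hsw.monoAB hsw.monoOB.injective.of_comp hsw.hfB (by omega)]

theorem pathSeed_fst_apply_pathVertex (hsw : IsSpiderWeb n m l fA fB aA oA aB oB)
    (x : SWV n m l → ℝ) {p : ℕ} (hp : p ≤ n - 3) (v : SWV n m l) :
    (pathSeed (pathVertex n m l) (swB n m l fA fB aA oA aB oB, x) p).1 v (pathVertex n m l p) =
      swCol aA oA aB oB p v := by
  have hn := hsw.hn
  exact pathSeed_fst_apply_self swB_antisymm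
    (injOn_pathVertex.mono fun q hq => by simp only [Set.mem_Iic, Set.mem_Iio] at hq ⊢; omega)
    _ (swCol_zero hsw) (fun p hp => swCol_succ hsw (by omega))
    (fun p hp => swCol_next (by omega)) (fun p q hpq hq => swCol_far hpq (by omega)) p hp v

theorem prod_pow_swCol (y : SWV n m l → ℝ) (p : ℕ) :
    ∏ v, y v ^ (swCol aA oA aB oB p v).toNat =
      y (Sum.inl (-1)) * xjm n m l fA aA oA y (p + 1) * xjp n m l fB aB oB y (p + 1) := by
  simp only [Fintype.prod_sum_type, swCol, prod_pow_midCol, prod_pow_sideCol, mul_assoc]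
  rfl

theorem prod_pow_neg_swCol (hsw : IsSpiderWeb n m l fA fB aA oA aB oB) {p : ℕ}
    (hp : p + 2 < n) (y : SWV n m l → ℝ) :
    ∏ v, y v ^ (-swCol aA oA aB oB p v).toNat =
      (if 1 ≤ p then y (pathVertex n m l (p - 1)) else 1) * y (pathVertex n m l (p + 1)) *
        xkA n m l fA aA oA y (p + 1) * xkB n m l fB aB oB y (p + 1) := by
  simp only [Fintype.prod_sum_type, swCol, prod_pow_neg_midCol hp,
    prod_pow_neg_sideCol hsw.monoAA hsw.monoOA.injective.of_comp hsw.hfA,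
    prod_pow_neg_sideCol hsw.monoAB hsw.monoOB.injective.of_comp hsw.hfB, mul_assoc]
  rfl

theorem pathSeed_succ_snd_pathVertex (hsw : IsSpiderWeb n m l fA fB aA oA aB oB)
    (x : SWV n m l → ℝ) {p : ℕ} (hp : p ≤ n - 3) :
    (pathSeed (pathVertex n m l) (swB n m l fA fB aA oA aB oB, x) (p + 1)).2
        (pathVertex n m l p) =
      ((if 1 ≤ p then
          (pathSeed (pathVertex n m l) (swB n m l fA fB aA oA aB oB, x) p).2
            (pathVertex n m l (p - 1))
        else 1) * x (pathVertex n m l (p + 1)) * xkA n m l fA aA oA x (p + 1) *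
          xkB n m l fB aB oB x (p + 1) +
        x (Sum.inl (-1)) * xjm n m l fA aA oA x (p + 1) * xjp n m l fB aB oB x (p + 1)) /
      x (pathVertex n m l p) := by
  have hn := hsw.hn
  set y := (pathSeed (pathVertex n m l) (swB n m l fA fB aA oA aB oB, x) p).2
  have hfix : ∀ v, (∀ q < p, pathVertex n m l q ≠ v) → y v = x v := fun v hv =>
    pathSeed_snd_eq_of_forall_ne p.zero_le fun q _ hq => hv q hq
  have hside : ∀ w, y (Sum.inr w) = x (Sum.inr w) := fun w => hfix _ fun _ _ => Sum.inl_ne_inr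
  have hmid : ∀ k, p ≤ k → k < n → y (pathVertex n m l k) = x (pathVertex n m l k) :=
    fun k hpk hk => hfix _ fun q hq h => by
      have := injOn_pathVertex (Set.mem_Iio.2 (by omega)) (Set.mem_Iio.2 hk) h
      omega
  have hlast : y (Sum.inl (-1)) = x (Sum.inl (-1)) := by
    rw [neg_one_eq_natCast]
    exact hmid (n - 1) (by omega) (by omega)
  rw [pathSeed_succ]
  change mutX _ _ y _ = _
  rw [mutX_self_of_col (pathSeed_fst_antisymm swB_antisymm p)
      (pathSeed_fst_apply_pathVertex hsw x hp), prod_pow_neg_swCol hsw (by omega),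
    prod_pow_swCol, hmid p le_rfl (by omega), hmid (p + 1) (by omega) (by omega), hlast]
  simp only [xjm, xjp, xkA, xkB, hside]

variable (aA oA aB oB) in
def halfwayX (x : SWV n m l → ℝ) (i : ℕ) : ℝ :=
  pathSum (fun j => xjm n m l fA aA oA x j * xjp n m l fB aB oB x j) (xm n m l x)
      (fun k => xm n m l x (k + 1) * xkA n m l fA aA oA x k * xkB n m l fB aB oB x k) i /
    ∏ k ∈ Icc 1 i, xm n m l x k

theorem halfwayX_zero (x : SWV n m l → ℝ) : halfwayX aA oA aB oB x 0 = 1 := by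
  simp [halfwayX, pathSum_zero, xjm, xjp]

theorem halfwayX_succ {x : SWV n m l → ℝ} (hx : ∀ v, x v ≠ 0) (p : ℕ) :
    halfwayX aA oA aB oB x (p + 1) =
      (halfwayX aA oA aB oB x p * (x (pathVertex n m l (p + 1)) *
          xkA n m l fA aA oA x (p + 1) * xkB n m l fB aB oB x (p + 1)) +
        x (Sum.inl (-1)) * (xjm n m l fA aA oA x (p + 1) * xjp n m l fB aB oB x (p + 1))) /
      x (pathVertex n m l p) := by
  rw [halfwayX, pathSum_div_prod_succ _ (xm n m l x) _ _ fun k => hx _, ← halfwayX, xm_succ,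
    xm_succ, xm_zero]

theorem pathSeed_snd_pathVertex (hsw : IsSpiderWeb n m l fA fB aA oA aB oB)
    {x : SWV n m l → ℝ} (hx : ∀ v, x v ≠ 0) {p : ℕ} (hp : p ≤ n - 3) :
    (pathSeed (pathVertex n m l) (swB n m l fA fB aA oA aB oB, x) (p + 1)).2
      (pathVertex n m l p) = halfwayX aA oA aB oB x (p + 1) := by
  induction p with
  | zero =>
    rw [pathSeed_succ_snd_pathVertex hsw x hp, if_neg (by omega), halfwayX_succ hx,
      halfwayX_zero]
    ring
  | succ p ih =>
    rw [pathSeed_succ_snd_pathVertex hsw x hp, if_pos (by omega), Nat.add_sub_cancel,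
      ih (by omega), halfwayX_succ hx (p + 1)]
    ring

end Quiver

end SpiderWeb

open SpiderWeb in
/-- for a spider web quiver with initial `x`-variables `x` and `x_0 := x_n`,
the mutation sequence `μ_{n−2} ⋯ μ₂ μ₁` applied to the initial seed gives, for each
`1 ≤ i ≤ n−2`,
`μ_{n−2}⋯μ₁(x_i) =
  [Σ_{j=0}^{i} x_{[j]⁻} x_{[j]⁺} (∏_{k=0}^{j−1} x_k)(∏_{k=j+1}^{i} x_{k+1} x_{k,A} x_{k,B})]
    / ∏_{k=1}^{i} x_k`. -/
theorem mutation_halfway_x_formula (n m l fA fB : ℕ)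
    [NeZero n] [NeZero m] [NeZero l] [NeZero fA] [NeZero fB]
    (aA : Fin fA → ZMod n) (oA : Fin fA → ZMod m)
    (aB : Fin fB → ZMod n) (oB : Fin fB → ZMod l)
    (hsw : IsSpiderWeb n m l fA fB aA oA aB oB)
    (x : SWV n m l → ℝ) (hx : ∀ v, 0 < x v)
    (i : ℕ) (hi1 : 1 ≤ i) (hi2 : i ≤ n - 2) :
    (((List.range (n - 2)).map fun s => (Sum.inl ((s : ZMod n)) : SWV n m l)).foldl stepX
          (swB n m l fA fB aA oA aB oB, x)).2 (midV n m l i) =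
      (∑ j ∈ Finset.range (i + 1),
          xjm n m l fA aA oA x j * xjp n m l fB aB oB x j *
            (∏ k ∈ Finset.range j, xm n m l x k) *
            ∏ k ∈ Finset.Icc (j + 1) i,
              (xm n m l x (k + 1) * xkA n m l fA aA oA x k * xkB n m l fB aB oB x k)) /
        ∏ k ∈ Finset.Icc 1 i, xm n m l x k := by
  obtain ⟨p, rfl⟩ : ∃ p, i = p + 1 := ⟨i - 1, by omega⟩
  have hn := hsw.hn
  rw [map_inl_range_eq_map_pathVertex]
  change (pathSeed (pathVertex n m l) (swB n m l fA fB aA oA aB oB, x) (n - 2)).2 _ =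
    halfwayX aA oA aB oB x (p + 1)
  have hlater : ∀ q, p + 1 ≤ q → q < n - 2 → pathVertex n m l q ≠ pathVertex n m l p :=
    fun q hq hq' h => by
      have := injOn_pathVertex (Set.mem_Iio.2 (by omega)) (Set.mem_Iio.2 (by omega)) h
      omega
  rw [midV_succ, pathSeed_snd_eq_of_forall_ne (by omega) hlater,
    pathSeed_snd_pathVertex hsw (fun v => (hx v).ne') (by omega)]
end
end

section
/- For a spider web quiver, τ is an involution on the x-variables: applying the mutation-and-transposition sequence τ twice returns every cluster x-variable to its original value. -/
noncomputable section

/-! ### Auxiliary lemmas -/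

section AuxLemmas

variable {V : Type*} [DecidableEq V] [Fintype V]

/-- A seed is good if its matrix is skew-symmetric and all `x`-variables are positive. -/
def GoodSeed (s : (V → V → ℤ) × (V → ℝ)) : Prop :=
  (∀ i j, s.1 j i = - s.1 i j) ∧ ∀ v, 0 < s.2 v

lemma mutB_of (B : V → V → ℤ) {k i j : V} (h : i = k ∨ j = k) :
    mutB B k i j = -B i j := if_pos h

lemma mutB_of_not (B : V → V → ℤ) {k i j : V} (h : ¬ (i = k ∨ j = k)) :
    mutB B k i j =
      B i j + max (B i k) 0 * max (B k j) 0 - max (-B i k) 0 * max (-B k j) 0 :=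
  if_neg h

lemma mutB_skew {B : V → V → ℤ} (hB : ∀ i j, B j i = - B i j) (k : V) :
    ∀ i j, mutB B k j i = - mutB B k i j := by
  intro i j
  by_cases h1 : i = k ∨ j = k
  · have h2 : j = k ∨ i = k := h1.symm
    rw [mutB_of B h2, mutB_of B h1, hB i j]
  · have h2 : ¬ (j = k ∨ i = k) := fun h => h1 h.symm
    rw [mutB_of_not B h1, mutB_of_not B h2, hB i j, hB k j, hB i k]
    simp only [neg_neg]
    ring

lemma mutB_invol (B : V → V → ℤ) (k : V) : mutB (mutB B k) k = B := by
  funext i j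
  by_cases h1 : i = k ∨ j = k
  · rw [mutB_of _ h1, mutB_of _ h1, neg_neg]
  · rw [mutB_of_not _ h1, mutB_of_not _ h1,
      mutB_of B (Or.inr rfl : i = k ∨ k = k), mutB_of B (Or.inl rfl : k = k ∨ j = k)]
    simp only [neg_neg]
    ring

lemma mutX_pos {B : V → V → ℤ} {x : V → ℝ} (hx : ∀ v, 0 < x v) (k : V) :
    ∀ v, 0 < mutX B k x v := by
  intro v
  unfold mutX
  split
  · exact div_pos
      (add_pos (Finset.prod_pos fun j _ => pow_pos (hx j) _)
        (Finset.prod_pos fun j _ => pow_pos (hx j) _)) (hx k)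
  · exact hx v

lemma goodSeed_stepX {s : (V → V → ℤ) × (V → ℝ)} (hs : GoodSeed s) (k : V) :
    GoodSeed (stepX s k) :=
  ⟨mutB_skew hs.1 k, mutX_pos hs.2 k⟩

lemma stepX_invol {s : (V → V → ℤ) × (V → ℝ)} (hs : GoodSeed s) (k : V) :
    stepX (stepX s k) k = s := by
  obtain ⟨B, x⟩ := s
  have hB : ∀ i j, B j i = - B i j := hs.1
  have hx : ∀ v, 0 < x v := hs.2
  unfold stepX
  dsimp only
  rw [mutB_invol]
  refine Prod.ext rfl ?_
  dsimp only
  funext i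
  by_cases hi : i = k
  · subst hi
    have hBkk : B i i = 0 := by have := hB i i; omega
    have e1 : ∀ j, mutB B i i j = B j i := fun j => by
      rw [mutB_of B (Or.inl rfl), (hB i j).symm]
    have e2 : ∀ j, mutB B i j i = B i j := fun j => by
      rw [mutB_of B (Or.inr rfl), hB i j]; ring
    have hx1 : ∀ j, mutX B i x j ^ (B j i).toNat = x j ^ (B j i).toNat := by
      intro j
      by_cases hj : j = i
      · subst hj; rw [hBkk]; simp
      · simp [mutX, hj]
    have hx2 : ∀ j, mutX B i x j ^ (B i j).toNat = x j ^ (B i j).toNat := by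
      intro j
      by_cases hj : j = i
      · subst hj; rw [hBkk]; simp
      · simp [mutX, hj]
    have hxk : mutX B i x i
        = ((∏ j, x j ^ (B i j).toNat) + ∏ j, x j ^ (B j i).toNat) / x i := by
      simp [mutX]
    have hP : (0:ℝ) < (∏ j, x j ^ (B i j).toNat) + ∏ j, x j ^ (B j i).toNat :=
      add_pos (Finset.prod_pos fun j _ => pow_pos (hx j) _)
        (Finset.prod_pos fun j _ => pow_pos (hx j) _)
    have hgoal : mutX (mutB B i) i (mutX B i x) i
        = (∏ j, mutX B i x j ^ (mutB B i i j).toNat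
          + ∏ j, mutX B i x j ^ (mutB B i j i).toNat) / mutX B i x i := by
      simp [mutX]
    rw [hgoal]
    have p1 : ∏ j, mutX B i x j ^ (mutB B i i j).toNat
        = ∏ j, x j ^ (B j i).toNat := by
      refine Finset.prod_congr rfl fun j _ => ?_
      rw [e1 j, hx1 j]
    have p2 : ∏ j, mutX B i x j ^ (mutB B i j i).toNat
        = ∏ j, x j ^ (B i j).toNat := by
      refine Finset.prod_congr rfl fun j _ => ?_
      rw [e2 j, hx2 j]
    rw [p1, p2, hxk, add_comm, div_div_eq_mul_div,
      mul_comm _ (x i), mul_div_assoc, div_self hP.ne', mul_one]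
  · show mutX (mutB B k) k (mutX B k x) i = x i
    simp [mutX, hi]

lemma goodSeed_foldl {s : (V → V → ℤ) × (V → ℝ)} (hs : GoodSeed s)
    (L : List V) : GoodSeed (L.foldl stepX s) := by
  induction L generalizing s with
  | nil => exact hs
  | cons a L ih => exact ih (goodSeed_stepX hs a)

lemma foldl_stepX_cancel (L : List V) :
    ∀ s : (V → V → ℤ) × (V → ℝ), GoodSeed s →
      List.foldl stepX (List.foldl stepX s L.reverse) L = s := by
  induction L with
  | nil => intro s _; rfl
  | cons a L ih =>
    intro s hs
    rw [List.reverse_cons, List.foldl_append, List.foldl_cons, List.foldl_cons,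
      List.foldl_nil, stepX_invol (goodSeed_foldl hs L.reverse) a]
    exact ih s hs

lemma stepX_relabelSeed (σ : Equiv.Perm V) (s : (V → V → ℤ) × (V → ℝ)) (k : V) :
    stepX (relabelSeed σ s) k = relabelSeed σ (stepX s (σ k)) := by
  obtain ⟨B, x⟩ := s
  unfold stepX relabelSeed relabelB
  dsimp only
  refine Prod.ext ?_ ?_
  · funext i j
    simp only [mutB, Equiv.apply_eq_iff_eq]
  · funext i
    by_cases hi : i = k
    · subst hi
      have hσ : ¬ (σ i ≠ σ i) := fun h => h rfl
      simp only [mutX, if_pos rfl, if_pos rfl]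
      rw [Equiv.prod_comp σ (fun j => x j ^ (B (σ i) j).toNat),
        Equiv.prod_comp σ (fun j => x j ^ (B j (σ i)).toNat)]
    · have hσi : ¬ σ i = σ k := fun h => hi (σ.injective h)
      simp only [mutX, if_neg hi, if_neg hσi]

lemma relabelSeed_relabelSeed (σ : Equiv.Perm V) (hσ : ∀ i, σ (σ i) = i)
    (s : (V → V → ℤ) × (V → ℝ)) :
    relabelSeed σ (relabelSeed σ s) = s := by
  obtain ⟨B, x⟩ := s
  unfold relabelSeed relabelB
  refine Prod.ext ?_ ?_
  · funext i j; simp [hσ]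
  · funext i; simp [hσ]

lemma goodSeed_relabelSeed (σ : Equiv.Perm V) {s : (V → V → ℤ) × (V → ℝ)}
    (hs : GoodSeed s) : GoodSeed (relabelSeed σ s) :=
  ⟨fun i j => hs.1 (σ i) (σ j), fun v => hs.2 (σ v)⟩

lemma range_map_decomp {A : Type*} (n : ℕ) (hn : 3 ≤ n) (f : ℕ → A) :
    (List.range n).map f
      = ((List.range (n - 2)).reverse.map f).reverse ++ [f (n - 2), f (n - 1)] := by
  rw [List.map_reverse, List.reverse_reverse]
  obtain ⟨k, hk⟩ : ∃ k, n = k + 2 := ⟨n - 2, by omega⟩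
  subst hk
  have h2 : k + 2 - 2 = k := by omega
  have h1 : k + 2 - 1 = k + 1 := by omega
  rw [h2, h1, List.range_succ, List.range_succ, List.map_append, List.map_append]
  simp

end AuxLemmas

/-- for a spider web quiver, `τ` is an involution on the `x`-variables:
applying the mutation-and-transposition sequence `τ` twice to the initial seed returns
every cluster `x`-variable to its original value. -/
theorem tau_involution_x (n m l fA fB : ℕ)
    [NeZero n] [NeZero m] [NeZero l] [NeZero fA] [NeZero fB]
    (aA : Fin fA → ZMod n) (oA : Fin fA → ZMod m)
    (aB : Fin fB → ZMod n) (oB : Fin fB → ZMod l)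
    (hsw : IsSpiderWeb n m l fA fB aA oA aB oB)
    (x : SWV n m l → ℝ) (hx : ∀ v, 0 < x v) :
    (tauX n m l (tauX n m l (swB n m l fA fB aA oA aB oB, x))).2 = x := by
  have hn3 : 3 ≤ n := hsw.hn
  set σ : Equiv.Perm (SWV n m l) := swapPerm n m l with hσdef
  set a : SWV n m l := Sum.inl (((n - 2 : ℕ) : ZMod n)) with ha
  set b : SWV n m l := Sum.inl (((n - 1 : ℕ) : ZMod n)) with hb
  have hσa : σ a = b := Equiv.swap_apply_left _ _
  have hσb : σ b = a := Equiv.swap_apply_right _ _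
  have hσσ : ∀ i, σ (σ i) = i := fun i => Equiv.swap_apply_self _ _ i
  set D : List (SWV n m l) := downList n m l with hD
  set U : List (SWV n m l) := upList n m l with hU
  -- decomposition of the lists
  have hup : U = D.reverse ++ [a, b] := by
    rw [hU, hD]
    unfold upList downList
    have e : ∀ (L : List ℕ), (do let a ← L; pure ((a : ZMod n)))
        = L.map (Nat.cast : ℕ → ZMod n) := by
      intro L
      induction L with
      | nil => rfl
      | cons c L ih => simp [List.flatMap_cons] at ih ⊢; exact ih
    rw [e, e, List.map_map, List.map_map]
    exact range_map_decomp n hn3 _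
  set s0 : (SWV n m l → SWV n m l → ℤ) × (SWV n m l → ℝ) :=
    (swB n m l fA fB aA oA aB oB, x) with hs0
  have hgood : GoodSeed s0 := by
    constructor
    · intro i j
      show swB n m l fA fB aA oA aB oB j i = - swB n m l fA fB aA oA aB oB i j
      unfold swB
      ring
    · exact hx
  -- abbreviations
  set t : (SWV n m l → SWV n m l → ℤ) × (SWV n m l → ℝ) := U.foldl stepX s0 with ht
  have hgt : GoodSeed t := goodSeed_foldl hgood U
  set r : (SWV n m l → SWV n m l → ℤ) × (SWV n m l → ℝ) :=
    D.reverse.foldl stepX s0 with hr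
  have hgr : GoodSeed r := goodSeed_foldl hgood D.reverse
  have htr : t = stepX (stepX r a) b := by
    rw [ht, hup, List.foldl_append, List.foldl_cons, List.foldl_cons, List.foldl_nil, hr]
  have htau1 : tauX n m l s0 = D.foldl stepX (relabelSeed σ t) := rfl
  have hgrel : GoodSeed (relabelSeed σ t) := goodSeed_relabelSeed σ hgt
  -- inner fold of the second application of tau
  have hinner : U.foldl stepX (tauX n m l s0) = relabelSeed σ (stepX (stepX t b) a) := by
    rw [hup, List.foldl_append, htau1]
    have hcancel : D.reverse.foldl stepX (D.foldl stepX (relabelSeed σ t))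
        = relabelSeed σ t := by
      have := foldl_stepX_cancel (V := SWV n m l) D.reverse (relabelSeed σ t) hgrel
      rwa [List.reverse_reverse] at this
    rw [hcancel, List.foldl_cons, List.foldl_cons, List.foldl_nil,
      stepX_relabelSeed σ t a, hσa, stepX_relabelSeed σ (stepX t b) b, hσb]
  have hmid : stepX (stepX t b) a = r := by
    rw [htr, stepX_invol (goodSeed_stepX hgr a) b, stepX_invol hgr a]
  have hfinal : tauX n m l (tauX n m l s0) = s0 := by
    show D.foldl stepX (relabelSeed σ (U.foldl stepX (tauX n m l s0))) = s0
    rw [hinner, relabelSeed_relabelSeed σ hσσ, hmid, hr]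
    exact foldl_stepX_cancel D s0 hgood
  rw [hfinal]
end
end

section
/- The map Y = (Y_1,…,Y_n) is an involution: Y(Y(y)) = y for all y_1,…,y_n > 0. -/
noncomputable section

/-- The convention `y_0 := 1`. -/
def Yc (y : ℕ → ℝ) : ℕ → ℝ := fun k => if k = 0 then 1 else y k

/-- The rational map `Y = (Y_1, …, Y_n)` on positive tuples `(y_1, …, y_n)` (with `y_0 := 1`):
for `1 ≤ i ≤ n−1`,
`Y_i(y) = [Σ_{j=i}^{n} ∏_{k=i}^{j−1} y_k + (∏_{k=i}^{n} y_k)(Σ_{j=0}^{i−2} ∏_{k=0}^{j} y_k)] /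
          [Σ_{j=i+1}^{n−1} ∏_{k=i+1}^{j} y_k + (∏_{k=i+1}^{n} y_k)(Σ_{j=0}^{i} ∏_{k=0}^{j} y_k)]`,
and
`Y_n(y) = [1 + y_n Σ_{j=0}^{n−2} ∏_{k=0}^{j} y_k] / [Σ_{j=1}^{n−1} ∏_{k=1}^{j} y_k + ∏_{k=1}^{n} y_k]`.
These are the paper's formulas for the effect of the mutation sequence `τ` on the
middle-circle `y`-variables of a spider web quiver. -/
def Ymap (n : ℕ) (y : ℕ → ℝ) : ℕ → ℝ := fun i =>
  if i = n then
    (1 + Yc y n * ∑ j ∈ Finset.range (n - 1), ∏ k ∈ Finset.range (j + 1), Yc y k) /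
      (∑ j ∈ Finset.Icc 1 (n - 1), ∏ k ∈ Finset.Icc 1 j, Yc y k +
        ∏ k ∈ Finset.Icc 1 n, Yc y k)
  else
    (∑ j ∈ Finset.Icc i n, ∏ k ∈ Finset.Ico i j, Yc y k +
        (∏ k ∈ Finset.Icc i n, Yc y k) *
          ∑ j ∈ Finset.range (i - 1), ∏ k ∈ Finset.range (j + 1), Yc y k) /
      (∑ j ∈ Finset.Icc (i + 1) (n - 1), ∏ k ∈ Finset.Icc (i + 1) j, Yc y k +
        (∏ k ∈ Finset.Icc (i + 1) n, Yc y k) *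
          ∑ j ∈ Finset.range (i + 1), ∏ k ∈ Finset.range (j + 1), Yc y k)


/-!
Extend `y` periodically modulo `n` and put `N_i = ∑_{m<n} y_i y_{i+1} ⋯ y_{i+m-1}` and
`P = y_1 ⋯ y_n`. The paper's formula reads `Y_i = N_i / (N_{i+1} + P - 1)`, and the cyclic
recurrence `y_i N_{i+1} = N_i + P - 1` turns it into `Y_i = N_i / (y_{i+1} N_{i+2})`. Products of
consecutive `Y`'s therefore telescope, so `∏ Y = 1 / P`, and a second telescoping sum gives
`N_i(Y) = y_i N_{i+1} / P`. Substituting these into the formula for `Y` returns `y_i`.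
-/

namespace Ymap

open Finset

/-- The representative of `i` modulo `n` in `[1, n]`. -/
def wrap (n i : ℕ) : ℕ := if i % n = 0 then n else i % n

def cyc {α : Type*} (n : ℕ) (y : ℕ → α) (i : ℕ) : α := y (wrap n i)

def seg {M : Type*} [CommMonoid M] (y : ℕ → M) (a m : ℕ) : M := ∏ t ∈ range m, y (a + t)

/-- `cycSum n y i` is the `N_i` of the proof sketch. -/
def cycSum {R : Type*} [CommRing R] (n : ℕ) (y : ℕ → R) (i : ℕ) : R :=
  ∑ m ∈ range n, seg (cyc n y) i m

section Cyclic

variable {α : Type*} {n : ℕ} {y : ℕ → α}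

lemma wrap_of_mem {i : ℕ} (h1 : 1 ≤ i) (h2 : i ≤ n) : wrap n i = i := by
  unfold wrap
  rcases h2.eq_or_lt with rfl | h
  · simp
  · rw [Nat.mod_eq_of_lt h, if_neg (by omega)]

lemma wrap_mem (hn : 0 < n) (i : ℕ) : 1 ≤ wrap n i ∧ wrap n i ≤ n := by
  unfold wrap
  split_ifs with h
  · exact ⟨hn, le_rfl⟩
  · exact ⟨Nat.one_le_iff_ne_zero.mpr h, (Nat.mod_lt i hn).le⟩

lemma wrap_mod (i : ℕ) : wrap n i % n = i % n := by
  unfold wrap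
  split_ifs with h
  · rw [Nat.mod_self, h]
  · exact Nat.mod_mod i n

lemma wrap_congr {i j : ℕ} (h : i % n = j % n) : wrap n i = wrap n j := by
  unfold wrap
  rw [h]

lemma cyc_of_mem {i : ℕ} (h1 : 1 ≤ i) (h2 : i ≤ n) : cyc n y i = y i := by
  rw [cyc, wrap_of_mem h1 h2]

lemma cyc_congr {i j : ℕ} (h : i % n = j % n) : cyc n y i = cyc n y j := by
  rw [cyc, cyc, wrap_congr h]

lemma cyc_add_self (i : ℕ) : cyc n y (i + n) = cyc n y i :=
  cyc_congr (Nat.add_mod_right i n)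

end Cyclic

section Segment

variable {M : Type*} [CommMonoid M] {n : ℕ} {y : ℕ → M}

@[simp]
lemma seg_zero (a : ℕ) : seg y a 0 = 1 := prod_range_zero _

lemma seg_succ (a m : ℕ) : seg y a (m + 1) = seg y a m * y (a + m) := prod_range_succ _ _

lemma seg_succ' (a m : ℕ) : seg y a (m + 1) = y a * seg y (a + 1) m := by
  simp only [seg, prod_range_succ', add_zero, add_assoc, add_comm 1]
  exact mul_comm _ _

lemma seg_add (a m k : ℕ) : seg y a (m + k) = seg y a m * seg y (a + m) k := by
  simp only [seg, prod_range_add, add_assoc]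

lemma seg_congr {w : ℕ → M} {a m : ℕ} (h : ∀ t < m, y (a + t) = w (a + t)) :
    seg y a m = seg w a m :=
  prod_congr rfl fun t ht => h t (mem_range.mp ht)

lemma seg_cyc_of_le {a m : ℕ} (ha : 1 ≤ a) (h : a + m ≤ n + 1) :
    seg (cyc n y) a m = seg y a m :=
  seg_congr fun _ _ => cyc_of_mem (by omega) (by omega)

lemma seg_cyc_add_self (a m : ℕ) : seg (cyc n y) (a + n) m = seg (cyc n y) a m :=
  prod_congr rfl fun t _ => by rw [add_right_comm, cyc_add_self]

lemma seg_cyc_period (i : ℕ) : seg (cyc n y) i n = seg y 1 n := by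
  have shift : ∀ j, seg (cyc n y) (j + 1) n = seg (cyc n y) j n := fun j => by
    obtain _ | k := n
    · simp
    · rw [seg_succ, seg_succ', add_assoc, add_comm 1 k, cyc_add_self, mul_comm]
  have from_zero : ∀ j, seg (cyc n y) j n = seg (cyc n y) 0 n := fun j => by
    induction j with
    | zero => rfl
    | succ j ih => rw [shift, ih]
  rw [from_zero, ← from_zero 1, seg_cyc_of_le le_rfl (by omega)]

end Segment

section CycSum

variable {R : Type*} [CommRing R] {n : ℕ} {y : ℕ → R}

lemma cycSum_congr {i j : ℕ} (h : i % n = j % n) : cycSum n y i = cycSum n y j :=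
  sum_congr rfl fun _ _ => prod_congr rfl fun t _ =>
    cyc_congr (by rw [Nat.add_mod, h, ← Nat.add_mod])

lemma cyc_mul_cycSum_succ (hn : 0 < n) (i : ℕ) :
    cyc n y i * cycSum n y (i + 1) = cycSum n y i + seg y 1 n - 1 := by
  obtain ⟨k, rfl⟩ : ∃ k, n = k + 1 := ⟨n - 1, by omega⟩
  have head : cycSum (k + 1) y i =
      1 + cyc (k + 1) y i * ∑ m ∈ range k, seg (cyc (k + 1) y) (i + 1) m := by
    simp only [cycSum, sum_range_succ', seg_succ', ← mul_sum, seg_zero]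
    ring
  have tail : cycSum (k + 1) y (i + 1) =
      ∑ m ∈ range k, seg (cyc (k + 1) y) (i + 1) m + seg (cyc (k + 1) y) (i + 1) k :=
    sum_range_succ _ _
  rw [← seg_cyc_period i, seg_succ', head, tail]
  ring

lemma cycSum_add_mul_sum_seg (hn : 0 < n) (i M : ℕ) :
    cycSum n y i + (seg y 1 n - 1) * ∑ m ∈ range M, seg (cyc n y) i m =
      seg (cyc n y) i M * cycSum n y (i + M) := by
  induction M with
  | zero => simp
  | succ M ih =>
    rw [sum_range_succ, mul_add, ← add_assoc, ih, seg_succ, mul_assoc, ← add_assoc,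
      cyc_mul_cycSum_succ hn]
    ring

/-- Splitting `N_i` (for `1 ≤ i ≤ n + 1`) at the point where the products wrap around past
`y_n`. -/
lemma cycSum_eq_split {i : ℕ} (h1 : 1 ≤ i) (h2 : i ≤ n + 1) :
    cycSum n y i = ∑ m ∈ range (n + 1 - i), seg y i m +
      seg y i (n + 1 - i) * ∑ r ∈ range (i - 1), seg y 1 r := by
  rw [cycSum, show range n = range ((n + 1 - i) + (i - 1)) by congr 1; omega, sum_range_add,
    mul_sum]
  congr 1
  · exact sum_congr rfl fun m hm => seg_cyc_of_le h1 (by simp at hm; omega)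
  · refine sum_congr rfl fun r hr => ?_
    rw [seg_add, seg_cyc_of_le h1 (by omega), show i + (n + 1 - i) = 1 + n by omega,
      seg_cyc_add_self, seg_cyc_of_le le_rfl (by simp at hr; omega)]

lemma cycSum_succ_add_sub_one {i : ℕ} (h : i ≤ n) :
    cycSum n y (i + 1) + seg y 1 n - 1 = (∑ m ∈ range (n - i), seg y (i + 1) m - 1) +
      seg y (i + 1) (n - i) * ∑ r ∈ range (i + 1), seg y 1 r := by
  rw [cycSum_eq_split (by omega) (by omega), show n = i + (n - i) by omega, seg_add,
    sum_range_succ, Nat.add_sub_add_right, Nat.add_sub_cancel, add_comm 1 i,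
    show i + (n - i) - i = n - i by omega]
  ring

end CycSum

lemma sum_Icc_eq_sum_range {M : Type*} [AddCommMonoid M] (f : ℕ → M) (a b : ℕ) :
    ∑ j ∈ Icc a b, f j = ∑ m ∈ range (b + 1 - a), f (a + m) := by
  rw [← Ico_add_one_right_eq_Icc, sum_Ico_eq_sum_range]

variable {n : ℕ} {y : ℕ → ℝ}

lemma prod_Ico_Yc {a : ℕ} (ha : 1 ≤ a) (b : ℕ) : ∏ k ∈ Ico a b, Yc y k = seg y a (b - a) := by
  rw [prod_Ico_eq_prod_range]
  exact prod_congr rfl fun t _ => if_neg (by omega)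

lemma prod_Icc_Yc {a : ℕ} (ha : 1 ≤ a) (b : ℕ) :
    ∏ k ∈ Icc a b, Yc y k = seg y a (b + 1 - a) := by
  rw [← Ico_add_one_right_eq_Icc, prod_Ico_Yc ha]

lemma prod_range_succ_Yc (j : ℕ) : ∏ k ∈ range (j + 1), Yc y k = seg y 1 j := by
  rw [prod_range_succ']
  simp [Yc, seg, add_comm]

lemma cycSum_eq_numerator {i : ℕ} (h1 : 1 ≤ i) (h2 : i ≤ n) :
    cycSum n y i = ∑ j ∈ Icc i n, ∏ k ∈ Ico i j, Yc y k +
      (∏ k ∈ Icc i n, Yc y k) * ∑ j ∈ range (i - 1), ∏ k ∈ range (j + 1), Yc y k := by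
  rw [cycSum_eq_split h1 (by omega), sum_Icc_eq_sum_range, prod_Icc_Yc h1]
  simp only [prod_Ico_Yc h1, prod_range_succ_Yc, Nat.add_sub_cancel_left]

lemma apply_of_lt {i : ℕ} (h1 : 1 ≤ i) (h2 : i < n) :
    Ymap n y i = cycSum n y i / (cycSum n y (i + 1) + seg y 1 n - 1) := by
  obtain ⟨d, hd⟩ : ∃ d, n - i = d + 1 := ⟨n - i - 1, by omega⟩
  have hden : ∑ j ∈ Icc (i + 1) (n - 1), ∏ k ∈ Icc (i + 1) j, Yc y k +
      (∏ k ∈ Icc (i + 1) n, Yc y k) * ∑ j ∈ range (i + 1), ∏ k ∈ range (j + 1), Yc y k =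
      cycSum n y (i + 1) + seg y 1 n - 1 := by
    rw [cycSum_succ_add_sub_one h2.le, hd, sum_Icc_eq_sum_range,
      prod_Icc_Yc (by omega), show n - 1 + 1 - (i + 1) = d by omega,
      show n + 1 - (i + 1) = d + 1 by omega]
    simp only [prod_Icc_Yc (show 1 ≤ i + 1 by omega), prod_range_succ_Yc, seg_zero,
      show ∀ m, i + 1 + m + 1 - (i + 1) = m + 1 by omega, sum_range_succ']
    ring
  rw [Ymap, if_neg h2.ne, cycSum_eq_numerator h1 h2.le, hden]

lemma apply_self (hn : 0 < n) :
    Ymap n y n = cycSum n y n / (cycSum n y (n + 1) + seg y 1 n - 1) := by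
  obtain ⟨k, rfl⟩ : ∃ k, n = k + 1 := ⟨n - 1, by omega⟩
  have hnum : 1 + Yc y (k + 1) * ∑ j ∈ range (k + 1 - 1), ∏ m ∈ range (j + 1), Yc y m =
      cycSum (k + 1) y (k + 1) := by
    rw [cycSum_eq_numerator (by omega) le_rfl]
    simp [Yc]
  have hden : ∑ j ∈ Icc 1 (k + 1 - 1), ∏ m ∈ Icc 1 j, Yc y m + ∏ m ∈ Icc 1 (k + 1), Yc y m =
      cycSum (k + 1) y (k + 1 + 1) + seg y 1 (k + 1) - 1 := by
    rw [cycSum_succ_add_sub_one le_rfl, sum_range_succ' _ (k + 1), sum_range_succ _ k,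
      sum_Icc_eq_sum_range]
    simp only [prod_Icc_Yc le_rfl, Nat.sub_self, seg_zero, range_zero, sum_empty,
      show ∀ m, 1 + m + 1 - 1 = m + 1 by omega, Nat.add_sub_cancel]
    ring
  rw [Ymap, if_pos rfl, hnum, hden]

lemma apply_eq {i : ℕ} (h1 : 1 ≤ i) (h2 : i ≤ n) :
    Ymap n y i = cycSum n y i / (cycSum n y (i + 1) + seg y 1 n - 1) := by
  rcases h2.lt_or_eq with h2 | rfl
  · exact apply_of_lt h1 h2
  · exact apply_self (by omega)

lemma cyc_Ymap (hn : 0 < n) (j : ℕ) :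
    cyc n (Ymap n y) j = cycSum n y j / (cyc n y (j + 1) * cycSum n y (j + 2)) := by
  have hmod : wrap n j % n = j % n := wrap_mod j
  rw [cyc, apply_eq (wrap_mem hn j).1 (wrap_mem hn j).2, cycSum_congr hmod,
    cycSum_congr (show (wrap n j + 1) % n = (j + 1) % n by rw [Nat.add_mod, hmod, ← Nat.add_mod]),
    cyc_mul_cycSum_succ hn]

lemma cyc_pos (hn : 0 < n) (hy : ∀ i, 1 ≤ i → i ≤ n → 0 < y i) (i : ℕ) : 0 < cyc n y i :=
  hy _ (wrap_mem hn i).1 (wrap_mem hn i).2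

lemma seg_pos (hy : ∀ i, 0 < y i) (a m : ℕ) : 0 < seg y a m :=
  prod_pos fun t _ => hy (a + t)

lemma seg_one_pos (hn : 0 < n) (hy : ∀ i, 1 ≤ i → i ≤ n → 0 < y i) : 0 < seg y 1 n :=
  seg_cyc_period (n := n) (y := y) 1 ▸ seg_pos (cyc_pos hn hy) 1 n

lemma cycSum_pos (hn : 0 < n) (hy : ∀ i, 1 ≤ i → i ≤ n → 0 < y i) (i : ℕ) :
    0 < cycSum n y i :=
  sum_pos (fun m _ => seg_pos (cyc_pos hn hy) i m) (nonempty_range_iff.mpr hn.ne')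

lemma seg_cyc_Ymap (hn : 0 < n) (hy : ∀ i, 1 ≤ i → i ≤ n → 0 < y i) (j m : ℕ) :
    seg (cyc n (Ymap n y)) j m = cycSum n y j * cycSum n y (j + 1) /
      (seg (cyc n y) (j + 1) m * (cycSum n y (j + m) * cycSum n y (j + m + 1))) := by
  have hN := cycSum_pos hn hy
  induction m with
  | zero => simp [(hN j).ne', (hN (j + 1)).ne']
  | succ m ih =>
    rw [seg_succ, ih, cyc_Ymap hn, seg_succ, show j + 1 + m = j + m + 1 by omega,
      show j + m + 2 = j + (m + 1) + 1 by omega, show j + m + 1 = j + (m + 1) by omega]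
    have := seg_pos (cyc_pos hn hy) (j + 1) m
    have := hN (j + m)
    field_simp

lemma seg_Ymap (hn : 0 < n) (hy : ∀ i, 1 ≤ i → i ≤ n → 0 < y i) :
    seg (Ymap n y) 1 n = (seg y 1 n)⁻¹ := by
  have hN := cycSum_pos hn hy
  rw [← seg_cyc_period 1, seg_cyc_Ymap hn hy, seg_cyc_period, add_comm 1 n,
    cycSum_congr (Nat.add_mod_left n 1), cycSum_congr (Nat.add_mod_left n 2)]
  have := hN 1
  have := hN 2
  field_simp

lemma sum_seg_cyc_Ymap (hn : 0 < n) (hy : ∀ i, 1 ≤ i → i ≤ n → 0 < y i) (j M : ℕ) :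
    ∑ m ∈ range M, seg (cyc n (Ymap n y)) j m = cyc n y j * cycSum n y (j + 1) *
      (∑ m ∈ range M, seg (cyc n y) j m) / (seg (cyc n y) j M * cycSum n y (j + M)) := by
  have hN := cycSum_pos hn hy
  induction M with
  | zero => simp
  | succ M ih =>
    have E1 : seg (cyc n y) j M * cyc n y (j + M) = cyc n y j * seg (cyc n y) (j + 1) M := by
      rw [← seg_succ, seg_succ']
    have E2 := cycSum_add_mul_sum_seg (y := y) hn j M
    have E3 := cyc_mul_cycSum_succ (y := y) hn (j + M)
    have := seg_pos (cyc_pos hn hy) j M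
    have := seg_pos (cyc_pos hn hy) (j + 1) M
    have := cyc_pos hn hy j
    have := hN (j + M)
    have := hN (j + M + 1)
    rw [sum_range_succ, ih, seg_cyc_Ymap hn hy, sum_range_succ, seg_succ', ← add_assoc j M 1,
      div_add_div _ _ (by positivity) (by positivity),
      div_eq_div_iff (by positivity) (by positivity)]
    linear_combination cycSum n y (j + 1) * cycSum n y (j + M) * cyc n y j *
      seg (cyc n y) (j + 1) M * cycSum n y (j + M + 1) *
      (-((∑ m ∈ range M, seg (cyc n y) j m) * cycSum n y (j + M + 1)) * E1 +
        (∑ m ∈ range M, seg (cyc n y) j m) * seg (cyc n y) j M * E3 + seg (cyc n y) j M * E2)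

lemma cycSum_Ymap (hn : 0 < n) (hy : ∀ i, 1 ≤ i → i ≤ n → 0 < y i) (j : ℕ) :
    cycSum n (Ymap n y) j = cyc n y j * cycSum n y (j + 1) / seg y 1 n := by
  have := cycSum_pos hn hy j
  have := seg_one_pos hn hy
  rw [cycSum, sum_seg_cyc_Ymap hn hy j n, ← cycSum, cycSum_congr (Nat.add_mod_right j n),
    seg_cyc_period]
  field_simp

end Ymap

theorem Ymap_involution_general (n : ℕ) (y : ℕ → ℝ)
    (hy : ∀ i, 1 ≤ i → i ≤ n → 0 < y i) :
    ∀ i, 1 ≤ i → i ≤ n → Ymap n (Ymap n y) i = y i := by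
  intro i h1 h2
  have hn : 0 < n := by omega
  set P := Ymap.seg y 1 n
  set N := Ymap.cycSum n y (i + 1)
  have hP : 0 < P := Ymap.seg_one_pos hn hy
  have hN : 0 < N := Ymap.cycSum_pos hn hy (i + 1)
  have hden : (N + P - 1) / P + P⁻¹ - 1 = N / P := by
    field_simp
    ring
  rw [Ymap.apply_eq h1 h2, Ymap.cycSum_Ymap hn hy, Ymap.cycSum_Ymap hn hy, Ymap.seg_Ymap hn hy,
    Ymap.cyc_mul_cycSum_succ hn (i + 1), Ymap.cyc_of_mem h1 h2, hden,
    div_div_div_cancel_right₀ hP.ne', mul_div_cancel_right₀ _ hN.ne']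

/-- the map `Y = (Y_1, …, Y_n)` is an involution: `Y(Y(y)) = y` for all
positive `y_1, …, y_n`. -/
theorem Ymap_involution (n : ℕ) (hn : 2 ≤ n) (y : ℕ → ℝ)
    (hy : ∀ i, 1 ≤ i → i ≤ n → 0 < y i) :
    ∀ i, 1 ≤ i → i ≤ n → Ymap n (Ymap n y) i = y i :=
  Ymap_involution_general n y hy
end
end

section
/- For all integers 1 ≤ d ≤ e ≤ n−1 and all y_1,…,y_n > 0, F_{d,e}(Y(y)) · F_{d,e}(y) = 1, where Y is the middle-circle transformation defined in the context. (This expresses that applying τ twice returns each generic outer-circle y-variable, whose transformation under τ is multiplication by the factor F_{d_i,e_i}(y), to its original value.) -/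
noncomputable section

/-- For `1 ≤ d ≤ e ≤ n−1`, the multiplier
`F_{d,e}(y) = [Σ_{j=e}^{n−1} ∏_{k=d+1}^{j} y_k + (∏_{k=d+1}^{n} y_k)(Σ_{j=0}^{e−1} ∏_{k=0}^{j} y_k)] /
             [Σ_{j=d+1}^{n} ∏_{k=d+1}^{j−1} y_k + (∏_{k=d+1}^{n} y_k)(Σ_{j=0}^{d−1} ∏_{k=0}^{j} y_k)]`
describing the transformation under `τ` of a generic outer-circle `y`-variable of a spider
web quiver. -/
def Fde (n d e : ℕ) (y : ℕ → ℝ) : ℝ :=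
  (∑ j ∈ Finset.Icc e (n - 1), ∏ k ∈ Finset.Icc (d + 1) j, Yc y k +
      (∏ k ∈ Finset.Icc (d + 1) n, Yc y k) *
        ∑ j ∈ Finset.range e, ∏ k ∈ Finset.range (j + 1), Yc y k) /
    (∑ j ∈ Finset.Icc (d + 1) n, ∏ k ∈ Finset.Ico (d + 1) j, Yc y k +
      (∏ k ∈ Finset.Icc (d + 1) n, Yc y k) *
        ∑ j ∈ Finset.range d, ∏ k ∈ Finset.range (j + 1), Yc y k)

/-! Write `L_i = cycSum n y i` for the cyclic sums `1 + y_i + y_i y_{i+1} + ⋯` (indices mod `n`).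
Then `Y_i = L_i / (y_{i+1} L_{i+2})`, `F_{d,e}(y) = y_{d+1} ⋯ y_e · L_{e+1} / L_{d+1}` and
`∏ Y = (∏ y)⁻¹`. The heart of the matter is `L_i(Y) = y_i L_{i+1}(y) / ∏ y`; substituting it, the
factors of `F_{d,e}(Y)` telescope to `F_{d,e}(y)⁻¹`. -/

namespace SpiderWeb

open Finset

def segProd (y : ℕ → ℝ) (a b : ℕ) : ℝ := ∏ k ∈ Icc a b, Yc y k

def prefixSum (y : ℕ → ℝ) (i : ℕ) : ℝ := ∑ j ∈ range i, ∏ k ∈ range (j + 1), Yc y k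

/-- `cycSum n y i = 1 + y_i + y_i y_{i+1} + ⋯`: the sum, over `m < n`, of the products of the
first `m` terms of the cyclic word `y_i, …, y_n, y_1, …, y_{i-1}`. -/
def cycSum (n : ℕ) (y : ℕ → ℝ) (i : ℕ) : ℝ :=
  ∑ j ∈ Icc i n, ∏ k ∈ Ico i j, Yc y k + segProd y i n * prefixSum y (i - 1)

section Identities

variable (n : ℕ) (y : ℕ → ℝ)

lemma segProd_of_lt {a b : ℕ} (h : b < a) : segProd y a b = 1 := by
  rw [segProd, Icc_eq_empty_of_lt h, prod_empty]

lemma segProd_self (a : ℕ) : segProd y a a = Yc y a := by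
  simp [segProd]

lemma segProd_succ {a b : ℕ} (h : a ≤ b + 1) :
    segProd y a (b + 1) = segProd y a b * Yc y (b + 1) :=
  prod_Icc_succ_top h _

lemma segProd_mul_segProd {a b c : ℕ} (hab : a ≤ b + 1) (hbc : b ≤ c) :
    segProd y a b * segProd y (b + 1) c = segProd y a c := by
  simp only [segProd, ← Ico_add_one_right_eq_Icc]
  exact prod_Ico_consecutive _ hab (by omega)

lemma prod_range_succ_Yc (m : ℕ) : ∏ k ∈ range (m + 1), Yc y k = segProd y 1 m := by
  induction m with
  | zero => simp [segProd, Yc]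
  | succ m ih => rw [prod_range_succ, ih, segProd_succ y (by omega)]

lemma prefixSum_succ (i : ℕ) : prefixSum y (i + 1) = prefixSum y i + segProd y 1 i := by
  rw [prefixSum, prefixSum, sum_range_succ, prod_range_succ_Yc]

lemma prefixSum_one : prefixSum y 1 = 1 := by
  simp [prefixSum, Yc]

lemma cycSum_succ (hn : 1 ≤ n) (i : ℕ) :
    cycSum n y (i + 1) =
      ∑ j ∈ Icc i (n - 1), segProd y (i + 1) j + segProd y (i + 1) n * prefixSum y i := by
  obtain ⟨m, rfl⟩ : ∃ m, n = m + 1 := ⟨n - 1, by omega⟩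
  simp only [cycSum, segProd, ← Ico_add_one_right_eq_Icc, ← sum_Ico_add', add_tsub_cancel_right]

lemma cycSum_top : cycSum n y (n + 1) = prefixSum y n := by
  simp [cycSum, segProd_of_lt]

lemma sum_segProd_add_eq_segProd_mul_cycSum (hn : 1 ≤ n) {a e : ℕ} (hae : a ≤ e + 1)
    (he : e ≤ n) :
    ∑ j ∈ Icc e (n - 1), segProd y a j + segProd y a n * prefixSum y e =
      segProd y a e * cycSum n y (e + 1) := by
  rw [cycSum_succ n y hn, mul_add, mul_sum, ← mul_assoc, segProd_mul_segProd y hae he]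
  congr 1
  exact sum_congr rfl fun j hj => (segProd_mul_segProd y hae (mem_Icc.1 hj).1).symm

lemma cycSum_rec (hn : 1 ≤ n) {i : ℕ} (hi1 : 1 ≤ i) (hi : i ≤ n) :
    cycSum n y i = 1 - segProd y 1 n + Yc y i * cycSum n y (i + 1) := by
  obtain ⟨m, rfl⟩ : ∃ m, i = m + 1 := ⟨i - 1, by omega⟩
  have hsplit : Icc m (n - 1) = insert m (Icc (m + 1) (n - 1)) := by
    ext x; simp only [mem_Icc, mem_insert]; omega
  have hnum := sum_segProd_add_eq_segProd_mul_cycSum n y hn (a := m + 1) (e := m + 1)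
    le_self_add hi
  rw [segProd_self, prefixSum_succ] at hnum
  have hprod := segProd_mul_segProd y (a := 1) (b := m) (c := n) (by omega) (by omega)
  rw [cycSum_succ n y hn, hsplit, sum_insert (by simp), segProd_of_lt y (Nat.lt_succ_self m)]
  linear_combination hnum - hprod

lemma cycSum_one_eq (hn : 1 ≤ n) {j : ℕ} (hj : j ≤ n) :
    cycSum n y 1 = (1 - segProd y 1 n) * prefixSum y j + segProd y 1 j * cycSum n y (j + 1) := by
  induction j with
  | zero => simp [prefixSum, segProd_of_lt]
  | succ j ih =>
    rw [prefixSum_succ, segProd_succ y (by omega)]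
    linear_combination ih (by omega) + segProd y 1 j * cycSum_rec n y hn (i := j + 1) (by omega) hj

lemma cycSum_top_eq_one (hn : 1 ≤ n) : cycSum n y (n + 1) = cycSum n y 1 := by
  rw [cycSum_one_eq n y hn le_rfl, cycSum_top]
  ring

lemma prefixSum_succ_mul_cycSum (hn : 1 ≤ n) {e : ℕ} (he : e + 1 ≤ n) :
    prefixSum y (e + 1) * cycSum n y (e + 1) =
      prefixSum y e * (Yc y (e + 1) * cycSum n y (e + 2)) + cycSum n y 1 := by
  rw [prefixSum_succ]
  linear_combination prefixSum y e * cycSum_rec n y hn (i := e + 1) (by omega) he -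
    cycSum_one_eq n y hn (j := e) (by omega)

lemma Fde_eq (hn : 1 ≤ n) {d e : ℕ} (hde : d ≤ e) (he : e ≤ n) :
    Fde n d e y = segProd y (d + 1) e * cycSum n y (e + 1) / cycSum n y (d + 1) := by
  rw [← sum_segProd_add_eq_segProd_mul_cycSum n y hn (by omega) he]
  rfl

lemma Ymap_of_lt {i : ℕ} (hi : i < n) :
    Ymap n y i = cycSum n y i / (Yc y (i + 1) * cycSum n y (i + 2)) := by
  have hden := sum_segProd_add_eq_segProd_mul_cycSum n y (by omega) (a := i + 1) (e := i + 1)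
    le_self_add hi
  rw [segProd_self] at hden
  rw [← hden]
  simp only [Ymap, if_neg hi.ne]
  rfl

lemma Ymap_self (hn : 1 ≤ n) :
    Ymap n y n = cycSum n y n / (Yc y 1 * cycSum n y 2) := by
  have hden := sum_segProd_add_eq_segProd_mul_cycSum n y hn (a := 1) (e := 1) le_self_add hn
  rw [segProd_self, prefixSum_one, mul_one] at hden
  have hnum : cycSum n y n = 1 + Yc y n * prefixSum y (n - 1) := by
    simp [cycSum, segProd_self]
  rw [← hden, hnum]
  simp only [Ymap, if_pos]
  rfl

end Identities

section Positive

variable {n : ℕ} {y : ℕ → ℝ} (hy : ∀ k ≤ n, 0 < Yc y k)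
include hy

lemma segProd_pos {a b : ℕ} (hb : b ≤ n) : 0 < segProd y a b :=
  prod_pos fun k hk => hy k ((mem_Icc.1 hk).2.trans hb)

lemma cycSum_pos (hn : 1 ≤ n) {i : ℕ} (hi : i ≤ n + 1) : 0 < cycSum n y i := by
  have hterm : ∀ s : Finset ℕ, (∀ k ∈ s, k ≤ n) → 0 ≤ ∏ k ∈ s, Yc y k :=
    fun s hs => prod_nonneg fun k hk => (hy k (hs k hk)).le
  rcases hi.lt_or_eq with hi | rfl
  · have hsum : 1 ≤ ∑ j ∈ Icc i n, ∏ k ∈ Ico i j, Yc y k := by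
      calc (1 : ℝ) = ∏ k ∈ Ico i i, Yc y k := by simp
        _ ≤ _ := single_le_sum (fun j hj => hterm _ fun k hk => by simp at hj hk; omega)
            (by simp; omega)
    have hA : 0 ≤ prefixSum y (i - 1) :=
      sum_nonneg fun j hj => hterm _ fun k hk => by simp at hj hk; omega
    have := mul_nonneg (segProd_pos hy le_rfl : 0 < segProd y i n).le hA
    rw [cycSum]
    linarith
  · rw [cycSum_top, prefixSum]
    refine lt_of_lt_of_le ?_ (single_le_sum (f := fun j => ∏ k ∈ range (j + 1), Yc y k)
      (fun j hj => hterm _ fun k hk => by simp at hj hk; omega) (mem_range.2 hn))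
    simp [Yc]

lemma Ymap_mul_of_lt (hn : 1 ≤ n) {i : ℕ} (hi : i < n) :
    Ymap n y i * (Yc y (i + 1) * cycSum n y (i + 2)) = cycSum n y i := by
  rw [Ymap_of_lt n y hi]
  exact div_mul_cancel₀ _ (mul_pos (hy _ hi) (cycSum_pos hy hn (by omega))).ne'

lemma Ymap_self_mul (hn : 1 ≤ n) :
    Ymap n y n * (Yc y 1 * cycSum n y 2) = cycSum n y n := by
  rw [Ymap_self n y hn]
  exact div_mul_cancel₀ _ (mul_pos (hy 1 (by omega)) (cycSum_pos hy hn (by omega))).ne'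

lemma segProd_Ymap_mul {d j : ℕ} (hdj : d ≤ j) (hj : j < n) :
    segProd (Ymap n y) (d + 1) j * segProd y (d + 2) (j + 1) *
        (cycSum n y (j + 1) * cycSum n y (j + 2)) =
      cycSum n y (d + 1) * cycSum n y (d + 2) := by
  induction j, hdj using Nat.le_induction with
  | base => rw [segProd_of_lt _ (by omega), segProd_of_lt _ (by omega)]; ring
  | succ j hdj ih =>
    rw [segProd_succ _ (by omega), segProd_succ _ (by omega), Yc, if_neg (by omega)]
    linear_combination ih (by omega) + segProd (Ymap n y) (d + 1) j *
      segProd y (d + 2) (j + 1) * cycSum n y (j + 2) * Ymap_mul_of_lt hy (by omega) hj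

lemma segProd_Ymap_mul_segProd (hn : 1 ≤ n) : segProd (Ymap n y) 1 n * segProd y 1 n = 1 := by
  obtain ⟨m, rfl⟩ : ∃ m, n = m + 1 := ⟨n - 1, by omega⟩
  have htel := segProd_Ymap_mul hy (d := 0) (j := m) m.zero_le (by omega)
  simp only [zero_add] at htel
  have hwrap : cycSum (m + 1) y (m + 2) = cycSum (m + 1) y 1 := cycSum_top_eq_one (m + 1) y hn
  have hsplit := segProd_mul_segProd y (a := 1) (b := 1) (c := m + 1) (by omega) (by omega)
  have hL : cycSum (m + 1) y 1 * cycSum (m + 1) y 2 * cycSum (m + 1) y (m + 1) ≠ 0 :=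
    (mul_pos (mul_pos (cycSum_pos hy hn (by omega)) (cycSum_pos hy hn (by omega)))
      (cycSum_pos hy hn (by omega))).ne'
  rw [segProd_self] at hsplit
  rw [segProd_succ _ (by omega), Yc, if_neg (by omega), ← hsplit]
  apply mul_right_cancel₀ hL
  linear_combination Ymap (m + 1) y (m + 1) * Yc y 1 * cycSum (m + 1) y 2 * htel
    + cycSum (m + 1) y 1 * cycSum (m + 1) y 2 * Ymap_self_mul hy hn
    - segProd (Ymap (m + 1) y) 1 m * Ymap (m + 1) y (m + 1) * Yc y 1 * segProd y 2 (m + 1)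
      * cycSum (m + 1) y 2 * cycSum (m + 1) y (m + 1) * hwrap

lemma prefixSum_Ymap_mul (hn : 1 ≤ n) {e : ℕ} (he1 : 1 ≤ e) (he : e ≤ n) :
    prefixSum (Ymap n y) e * segProd y 2 e * cycSum n y (e + 1) =
      cycSum n y 2 * prefixSum y e := by
  induction e, he1 using Nat.le_induction with
  | base => rw [prefixSum_one, prefixSum_one, segProd_of_lt _ (by omega)]; ring
  | succ e he1 ih =>
    have htel := segProd_Ymap_mul hy (d := 0) (j := e) (by omega) (by omega)
    simp only [zero_add] at htel
    apply mul_right_cancel₀ (cycSum_pos hy hn (i := e + 1) (by omega)).ne'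
    rw [prefixSum_succ, segProd_succ _ (by omega)] at *
    linear_combination Yc y (e + 1) * cycSum n y (e + 2) * ih (by omega) + htel
      - cycSum n y 2 * prefixSum_succ_mul_cycSum n y hn he

/- Downward induction along `cycSum_rec`, which holds for `Ymap n y` as well, starting from
`cycSum n (Ymap n y) (n + 1) = prefixSum (Ymap n y) n`. Summing the telescoping products of
`Ymap` directly would divide by `∏ y - 1`. -/
lemma cycSum_Ymap_mul_segProd (hn : 1 ≤ n) {i : ℕ} (hi1 : 1 ≤ i) (hi : i ≤ n) :
    cycSum n (Ymap n y) i * segProd y 1 n = Yc y i * cycSum n y (i + 1) := by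
  have hprod := segProd_Ymap_mul_segProd hy hn
  induction hi using Nat.decreasingInduction with
  | self =>
    have hA := prefixSum_Ymap_mul hy hn hn le_rfl
    rw [cycSum_top] at hA
    have hA' : prefixSum (Ymap n y) n * segProd y 2 n = cycSum n y 2 := by
      refine mul_right_cancel₀ ?_ hA
      exact (cycSum_top n y ▸ cycSum_pos hy hn (i := n + 1) le_rfl).ne'
    have hsplit := segProd_mul_segProd y (a := 1) (b := 1) (c := n) (by omega) hn
    rw [segProd_self] at hsplit
    have hrec := cycSum_rec n (Ymap n y) hn hn le_rfl
    rw [cycSum_top, Yc, if_neg (by omega)] at hrec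
    linear_combination segProd y 1 n * hrec - hprod + Ymap n y n * Yc y 1 * hA'
      - Ymap n y n * prefixSum (Ymap n y) n * hsplit
      + Ymap_self_mul hy hn + cycSum_rec n y hn hn le_rfl
  | of_succ k hk ih =>
    have hrec := cycSum_rec n (Ymap n y) hn hi1 hk.le
    rw [Yc, if_neg (by omega)] at hrec
    linear_combination segProd y 1 n * hrec - hprod + Ymap n y k * ih (by omega)
      + Ymap_mul_of_lt hy hn hk + cycSum_rec n y hn hi1 hk.le

end Positive

end SpiderWeb

open SpiderWeb

theorem Fde_mul_eq_one_general (n : ℕ) (y : ℕ → ℝ)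
    (hy : ∀ i, 1 ≤ i → i ≤ n → 0 < y i) :
    ∀ d e : ℕ, 1 ≤ d → d ≤ e → e ≤ n - 1 →
      Fde n d e (Ymap n y) * Fde n d e y = 1 := by
  intro d e hd hde he
  have hn : 1 ≤ n := by omega
  have hY : ∀ k ≤ n, 0 < Yc y k := fun k hk => by
    unfold Yc
    split_ifs with hk0
    exacts [one_pos, hy k (by omega) hk]
  have hP := (segProd_pos hY (a := 1) le_rfl).ne'
  rw [Fde_eq n _ hn hde (by omega), Fde_eq n _ hn hde (by omega),
    eq_div_of_mul_eq hP (cycSum_Ymap_mul_segProd hY hn (i := e + 1) (by omega) (by omega)),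
    eq_div_of_mul_eq hP (cycSum_Ymap_mul_segProd hY hn (i := d + 1) (by omega) (by omega))]
  have htel := segProd_Ymap_mul hY hde (by omega : e < n)
  have hsplit : Yc y (d + 1) * segProd y (d + 2) (e + 1) = segProd y (d + 1) e * Yc y (e + 1) := by
    rw [← segProd_succ y (by omega), ← segProd_self, segProd_mul_segProd y (by omega) (by omega)]
  have hyd := hY (d + 1) (by omega)
  have hLd := cycSum_pos hY hn (i := d + 1) (by omega)
  have hLd' := cycSum_pos hY hn (i := d + 2) (by omega)
  field_simp
  linear_combination Yc y (d + 1) * htel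
    - segProd (Ymap n y) (d + 1) e * cycSum n y (e + 2) * cycSum n y (e + 1) * hsplit

/-- for all `1 ≤ d ≤ e ≤ n−1` and positive `y`,
`F_{d,e}(Y(y)) · F_{d,e}(y) = 1`. -/
theorem Fde_mul_eq_one (n : ℕ) (hn : 2 ≤ n) (y : ℕ → ℝ)
    (hy : ∀ i, 1 ≤ i → i ≤ n → 0 < y i) :
    ∀ d e : ℕ, 1 ≤ d → d ≤ e → e ≤ n - 1 →
      Fde n d e (Ymap n y) * Fde n d e y = 1 :=
  Fde_mul_eq_one_general n y hy
end
end
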